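/- arXiv:2104.08349 — 6 statements merged into one kernel-verified Lean document; each statement's English description precedes it below -/
import Mathlib

section
/- Let $F$ be a field, $n \geq 2$ a natural number, and $\alpha \in F$ such that the polynomial $X^n - X - \alpha$ is irreducible over $F$. Let $K = F[X]/(X^n - X - \alpha)$ and let $x$ be the image of $X$ in $K$. Then the trace $\mathrm{Tr}_{K/F}(x^i) = 0$ for all $i \in \{1, \dots, n-2\}$, and $\mathrm{Tr}_{K/F}(x^{n-1}) = n - 1$. -/
open Polynomial

/-- Let `F` be a field, `n ≥ 2`, and `α ∈ F` such that `X^n - X - α` is irreducible over `F`.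
Let `K = F[X]/(X^n - X - α)` and `x` the image of `X`. Then `Tr_{K/F}(x^i) = 0` for
`1 ≤ i ≤ n - 2`, and `Tr_{K/F}(x^(n-1)) = n - 1`. -/
theorem trace_powers_root_of_artin_schreier_type (F : Type*) [Field F] (n : ℕ) (hn : 2 ≤ n)
    (α : F) (hirr : Irreducible (X ^ n - X - C α : F[X])) :
    (∀ i : ℕ, 1 ≤ i → i ≤ n - 2 →
      Algebra.trace F (AdjoinRoot (X ^ n - X - C α : F[X]))
        (AdjoinRoot.root (X ^ n - X - C α : F[X]) ^ i) = 0) ∧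
    Algebra.trace F (AdjoinRoot (X ^ n - X - C α : F[X]))
        (AdjoinRoot.root (X ^ n - X - C α : F[X]) ^ (n - 1)) = (n : F) - 1 := by
  set f : F[X] := X ^ n - X - C α with hf
  have hfeq : f = X ^ n - ((X : F[X]) + C α) := by ring
  have hdXa : ((X : F[X]) + C α).degree < ((n : ℕ) : WithBot ℕ) := by
    refine lt_of_le_of_lt (degree_add_le _ _) ?_
    rw [degree_X]
    have hC : (C α).degree ≤ 0 := degree_C_le
    have h1 : (1 : WithBot ℕ) < ((n : ℕ) : WithBot ℕ) := by exact_mod_cast hn.trans_lt' one_lt_two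
    exact max_lt h1 (lt_of_le_of_lt hC (by exact_mod_cast (by omega : 0 < n)))
  have hm : f.Monic := by rw [hfeq]; exact monic_X_pow_sub hdXa
  have hdeg : f.natDegree = n := by
    rw [hfeq, natDegree_sub_eq_left_of_natDegree_lt, natDegree_X_pow]
    rw [natDegree_X_pow]
    have := natDegree_add_le (X : F[X]) (C α)
    simp only [natDegree_X, natDegree_C] at this
    omega
  have hdegf : f.degree = ((n : ℕ) : WithBot ℕ) := by
    rw [degree_eq_natDegree hm.ne_zero, hdeg]
  -- key mod computations
  have hmodlt : ∀ m : ℕ, m < n → (X ^ m : F[X]) %ₘ f = X ^ m := by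
    intro m hmn
    rw [modByMonic_eq_self_iff hm, hdegf, degree_X_pow]
    exact_mod_cast hmn
  have hmodge : ∀ k : ℕ, k + 1 < n → (X ^ (n + k) : F[X]) %ₘ f = X ^ (k + 1) + C α * X ^ k := by
    intro k hk
    have hid : (X ^ (n + k) : F[X]) = X ^ k * f + (X ^ (k + 1) + C α * X ^ k) := by
      rw [hf]; ring
    rw [hid, add_modByMonic, mul_self_modByMonic hm, zero_add, modByMonic_eq_self_iff hm, hdegf]
    refine lt_of_le_of_lt (degree_add_le _ _) (max_lt ?_ ?_)
    · rw [degree_X_pow]; exact_mod_cast hk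
    · refine lt_of_le_of_lt (degree_C_mul_X_pow_le _ _) ?_
      exact_mod_cast (by omega : k < n)
  -- trace formula
  have key : ∀ i : ℕ, Algebra.trace F (AdjoinRoot f) (AdjoinRoot.root f ^ i) =
      ∑ j : Fin f.natDegree, ((X ^ (i + (j : ℕ)) : F[X]) %ₘ f).coeff j := by
    intro i
    rw [Algebra.trace_eq_matrix_trace (AdjoinRoot.powerBasisAux' hm)]
    rw [Matrix.trace]
    refine Finset.sum_congr rfl fun j _ => ?_
    rw [Matrix.diag_apply, Algebra.leftMulMatrix_eq_repr_mul]
    have hb : (AdjoinRoot.powerBasisAux' hm) j = AdjoinRoot.root f ^ (j : ℕ) := by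
      have := (AdjoinRoot.powerBasis' hm).basis_eq_pow j
      exact this
    rw [hb, AdjoinRoot.powerBasisAux'_repr_apply_to_fun, ← pow_add]
    have hr : AdjoinRoot.root f ^ (i + (j : ℕ)) = AdjoinRoot.mk f (X ^ (i + (j : ℕ))) := by
      rw [map_pow, AdjoinRoot.mk_X]
    rw [hr, AdjoinRoot.modByMonicHom_mk]
  constructor
  · intro i hi1 hi2
    rw [key i]
    refine Finset.sum_eq_zero fun j _ => ?_
    have hj : (j : ℕ) < n := hdeg ▸ j.2
    by_cases hc : i + (j : ℕ) < n
    · rw [hmodlt _ hc, coeff_X_pow, if_neg (by omega)]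
    · have h1 : i + (j : ℕ) = n + (i + (j : ℕ) - n) := by omega
      rw [h1, hmodge _ (by omega), coeff_add, coeff_X_pow, if_neg (by omega),
        coeff_C_mul, coeff_X_pow, if_neg (by omega), mul_zero, add_zero]
  · rw [key (n - 1)]
    have hsum : ∀ j : Fin f.natDegree,
        ((X ^ (n - 1 + (j : ℕ)) : F[X]) %ₘ f).coeff j = if (j : ℕ) = 0 then 0 else 1 := by
      intro j
      have hj : (j : ℕ) < n := hdeg ▸ j.2
      by_cases h0 : (j : ℕ) = 0
      · rw [h0, if_pos rfl, Nat.add_zero, hmodlt _ (by omega), coeff_X_pow, if_neg (by omega)]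
      · have h1 : n - 1 + (j : ℕ) = n + ((j : ℕ) - 1) := by omega
        rw [h1, hmodge _ (by omega), if_neg h0, coeff_add, coeff_X_pow,
          if_pos (by omega), coeff_C_mul, coeff_X_pow, if_neg (by omega), mul_zero, add_zero]
    rw [Finset.sum_congr rfl fun j _ => hsum j,
      Fin.sum_univ_eq_sum_range (fun k => if k = 0 then (0 : F) else 1), hdeg]
    have hsplit : ∀ k ∈ Finset.range n,
        (if k = 0 then (0 : F) else 1) = 1 - (if k = 0 then (1 : F) else 0) := by
      intro k _; split <;> simp
    rw [Finset.sum_congr rfl hsplit, Finset.sum_sub_distrib, Finset.sum_const,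
      Finset.card_range, Finset.sum_ite_eq' (Finset.range n) 0 (fun _ => (1 : F)),
      if_pos (Finset.mem_range.mpr (by omega))]
    simp [nsmul_eq_mul]
end

section
/- Let $E$ be a field of characteristic $p > 0$ and $\alpha \in E \setminus E^p$. For each $i \in \{0, 1, \dots, p-1\}$ let $V_i$ be the $E^p$-vector subspace of $E$ spanned by $\{(\alpha - i)^k : k \in \{1, \dots, p-1\}\}$, where $i$ is interpreted as an element of the prime field inside $E$. Then $\bigcap_{i=0}^{p-1} V_i = \{0\}$. -/
open Polynomial

/-- Let `E` be a field of characteristic `p > 0` and `α ∈ E \ E^p`. For `0 ≤ i ≤ p-1`, let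
`V i` be the `E^p`-subspace of `E` spanned by `{(α - i)^k : 1 ≤ k ≤ p-1}` (with `i` viewed in
the prime field of `E`). Then `⋂ i, V i = {0}`. -/
theorem iInf_span_powers_alpha_sub_i_eq_bot (E : Type*) [Field E] (p : ℕ) [Fact p.Prime]
    [CharP E p] (α : E) (hα : α ∉ (frobenius E p).fieldRange) :
    (⨅ i : Fin p, Submodule.span ((frobenius E p).fieldRange)
      ((fun k : ℕ => (α - (i : ℕ)) ^ k) '' {k : ℕ | 1 ≤ k ∧ k ≤ p - 1})) = ⊥ := by
  classical
  have hp : p.Prime := Fact.out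
  set K : Subfield E := (frobenius E p).fieldRange with hK
  -- α is integral over K with minimal polynomial X^p - C (α^p)
  have hapK : α ^ p ∈ K := ⟨α, rfl⟩
  set a : K := ⟨α ^ p, hapK⟩ with ha
  have hamap : algebraMap K E a = α ^ p := rfl
  have hroot : aeval α (X ^ p - C a : K[X]) = 0 := by
    simp [map_sub, map_pow, aeval_X, aeval_C, hamap]
  have hmonic : (X ^ p - C a : K[X]).Monic := monic_X_pow_sub_C a hp.ne_zero
  have hirr : Irreducible (X ^ p - C a : K[X]) := by
    apply X_pow_sub_C_irreducible_of_prime hp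
    intro b hb
    apply hα
    have hb' : (b : E) ^ p = α ^ p := by
      have := congrArg (Subtype.val) hb
      push_cast at this
      exact this
    have : frobenius E p (b : E) = frobenius E p α := by
      simpa [frobenius_def] using hb'
    have hbα : (b : E) = α := (frobenius E p).injective this
    exact hbα ▸ b.2
  have hint : IsIntegral K α := ⟨X ^ p - C a, hmonic, hroot⟩
  have hmin : minpoly K α = X ^ p - C a :=
    (minpoly.eq_of_irreducible_of_monic hirr hroot hmonic).symm
  have hmindeg : (minpoly K α).natDegree = p := by
    rw [hmin, natDegree_X_pow_sub_C]
  -- key: polynomials of degree < p vanishing at α are zero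
  have key : ∀ g : K[X], g.natDegree < p → aeval α g = 0 → g = 0 := by
    intro g hdeg hg
    by_contra hne
    have h1 := minpoly.degree_le_of_ne_zero K α hne hg
    rw [hmin, degree_X_pow_sub_C hp.pos] at h1
    exact absurd h1 (not_le.mpr (((natDegree_lt_iff_degree_lt hne).mp hdeg)))
  rw [eq_bot_iff]
  intro x hx
  simp only [Submodule.mem_iInf] at hx
  rw [Submodule.mem_bot]
  -- extract representations
  have hrep : ∀ i : Fin p, ∃ g : K[X], g.natDegree < p ∧ aeval α g = x ∧
      g.eval ((i : ℕ) : K) = 0 := by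
    intro i
    have h := hx i
    rw [Finsupp.mem_span_image_iff_linearCombination] at h
    obtain ⟨l, hl, hlx⟩ := h
    rw [Finsupp.mem_supported] at hl
    refine ⟨l.sum fun k c => C c * (X - C ((i : ℕ) : K)) ^ k, ?_, ?_, ?_⟩
    · apply lt_of_le_of_lt (natDegree_sum_le_of_forall_le _ _ ?_) (show p - 1 < p by have := hp.pos; omega)
      intro k hk
      have hk' : 1 ≤ k ∧ k ≤ p - 1 := hl hk
      have h1 : ((X - C ((i : ℕ) : K)) ^ k).natDegree = k := by
        rw [natDegree_pow, natDegree_X_sub_C, mul_one]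
      calc (C (l k) * (X - C ((i : ℕ) : K)) ^ k).natDegree
          ≤ (C (l k)).natDegree + ((X - C ((i : ℕ) : K)) ^ k).natDegree := natDegree_mul_le
        _ ≤ p - 1 := by rw [natDegree_C, h1]; omega
    · rw [← hlx, Finsupp.linearCombination_apply, map_finsuppSum, Finsupp.sum, Finsupp.sum]
      apply Finset.sum_congr rfl
      intro k _
      simp [Algebra.smul_def, mul_comm]
    · rw [Finsupp.sum, eval_finset_sum]
      apply Finset.sum_eq_zero
      intro k hk
      have hk' : 1 ≤ k ∧ k ≤ p - 1 := hl hk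
      simp [zero_pow (by omega : k ≠ 0)]
  choose g hgdeg hgx hgroot using hrep
  -- all the g i are equal
  have hzero : 0 < p := hp.pos
  have hgeq : ∀ i : Fin p, g i = g ⟨0, hzero⟩ := by
    intro i
    have hsub : g i - g ⟨0, hzero⟩ = 0 := by
      apply key
      · exact lt_of_le_of_lt (natDegree_sub_le _ _) (max_lt (hgdeg i) (hgdeg ⟨0, hzero⟩))
      · rw [map_sub, hgx i, hgx ⟨0, hzero⟩, sub_self]
    exact sub_eq_zero.mp hsub
  have hgeq' : ∀ i : Fin p, g i = g ⟨0, hzero⟩ := hgeq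
  -- g ⟨0⟩ has p distinct roots and degree < p, hence is zero
  have hinj : Function.Injective (fun i : Fin p => ((i : ℕ) : K)) := by
    intro i j hij
    have : ((i : ℕ) : E) = ((j : ℕ) : E) := by
      have := congrArg (Subtype.val) hij
      push_cast at this
      exact this
    have := CharP.natCast_injOn_Iio E p i.2 j.2 this
    exact Fin.ext this
  have hg0 : g ⟨0, hzero⟩ = 0 := by
    apply eq_zero_of_natDegree_lt_card_of_eval_eq_zero _ hinj
    · intro i
      rw [← hgeq' i]
      exact hgroot i
    · simpa using hgdeg ⟨0, hzero⟩
  rw [← hgx ⟨0, hzero⟩, hg0, map_zero]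
end

section
/- Let $E$ be a field of characteristic $p > 0$, and let $\alpha, \beta \in E$ be such that $[E^p(\alpha, \beta) : E^p] = p^2$ (equivalently, $\alpha \notin E^p$ and $\beta \notin E^p(\alpha)$). For $i \in \{0, \dots, p-1\}$ define $W_{i,0} = \mathrm{Span}_{E^p}\{(\alpha - i)^m \beta^n : m, n \in \{0, \dots, p-1\}, (m,n) \neq (0,0)\}$, and for $i \in \{0, \dots, p-1\}$, $j \in \{1, \dots, p-1\}$ define $W_{i,j} = \mathrm{Span}_{E^p}\{\alpha^m (\alpha^i \beta - j)^n : m, n \in \{0, \dots, p-1\}, (m,n) \neq (0,0)\}$, where $i, j$ are interpreted in the prime field of $E$. Then $\bigcap_{(i,j) \in \{0,\dots,p-1\}^2} W_{i,j} = \{0\}$. -/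
open Polynomial

lemma coeff_helper {F : Type*} [Semiring F] {p : ℕ} (d : Fin p → F) (n : Fin p) :
    (∑ m : Fin p, C (d m) * X ^ (m : ℕ)).coeff (n : ℕ) = d n := by
  rw [Polynomial.finset_sum_coeff]
  rw [Finset.sum_eq_single n]
  · simp
  · intro b _ hb
    simp only [Polynomial.coeff_C_mul, Polynomial.coeff_X_pow]
    rw [if_neg (fun h => hb (Fin.ext h.symm)), mul_zero]
  · simp

lemma natdeg_helper {F : Type*} [Semiring F] [Nontrivial F] {p : ℕ} (hp : 0 < p) (d : Fin p → F) :
    (∑ m : Fin p, C (d m) * X ^ (m : ℕ)).natDegree < p := by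
  have h : (∑ m : Fin p, C (d m) * X ^ (m : ℕ)).natDegree ≤ p - 1 :=
    Polynomial.natDegree_sum_le_of_forall_le _ _ (fun m _ => by
      refine le_trans (Polynomial.natDegree_C_mul_le _ _) ?_
      rw [Polynomial.natDegree_X_pow]
      exact Nat.le_sub_one_of_lt m.isLt)
  omega

lemma vanish {F : Type*} [Field F] {p : ℕ} (hp : p.Prime) [CharP F p] (d : Fin p → F)
    (h : ∀ i : Fin p, ∑ n : Fin p, d n * ((i : ℕ) : F) ^ (n : ℕ) = 0) :
    ∀ n, d n = 0 := by
  set Q : F[X] := ∑ m : Fin p, C (d m) * X ^ (m : ℕ) with hQ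
  have hinj : Function.Injective (fun i : Fin p => ((i : ℕ) : F)) := by
    intro a b hab
    exact Fin.ext (CharP.natCast_injOn_Iio F p a.isLt b.isLt hab)
  have heval : ∀ i : Fin p, Q.eval ((i : ℕ) : F) = 0 := by
    intro i
    rw [hQ, Polynomial.eval_finset_sum]
    simpa using h i
  have hQ0 : Q = 0 := by
    refine Polynomial.eq_zero_of_natDegree_lt_card_of_eval_eq_zero Q hinj heval ?_
    simpa [Fintype.card_fin] using natdeg_helper hp.pos d
  intro n
  rw [← coeff_helper d n, ← hQ, hQ0, Polynomial.coeff_zero]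

-- Lemma A
lemma pow_li {E : Type*} [Field E] {p : ℕ} (hp : p.Prime) [CharP E p]
    (F : Subfield E) (x : E) (hxp : x ^ p ∈ F) (hx : x ∉ F) :
    LinearIndependent F (fun m : Fin p => x ^ (m : ℕ)) := by
  classical
  haveI : ExpChar E p := ExpChar.prime hp
  rw [Fintype.linearIndependent_iff]
  intro c hc
  by_contra hne
  push_neg at hne
  obtain ⟨m0, hm0⟩ := hne
  set q : Polynomial F := ∑ m : Fin p, C (c m) * X ^ (m : ℕ) with hq
  have hqne : q ≠ 0 := fun h0 => hm0 (by rw [← coeff_helper c m0, ← hq, h0, coeff_zero])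
  have haev : (Polynomial.aeval x) q = 0 := by
    rw [hq, map_sum]
    rw [← hc]
    refine Finset.sum_congr rfl fun m _ => ?_
    simp only [map_mul, Polynomial.aeval_C, map_pow, Polynomial.aeval_X]
    rfl
  -- the minimal polynomial of x over F is X^p - C ⟨x^p⟩
  set a : F := ⟨x ^ p, hxp⟩ with ha
  have hirr : Irreducible (X ^ p - C a : Polynomial F) := by
    refine X_pow_sub_C_irreducible_of_prime hp (fun b hb => hx ?_)
    have hbE : (b : E) ^ p = x ^ p := by
      have := congrArg (Subfield.subtype F) hb
      simpa [ha] using this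
    have : (b : E) = x := by
      have h2 := frobenius_inj E p (a₁ := (b : E)) (a₂ := x)
      simp only [frobenius_def] at h2
      exact h2 hbE
    rw [← this]; exact b.2
  have hmin : minpoly F x = X ^ p - C a := by
    refine (minpoly.eq_of_irreducible_of_monic hirr ?_ (Polynomial.monic_X_pow_sub_C a hp.ne_zero)).symm
    simp only [map_sub, map_pow, Polynomial.aeval_X, Polynomial.aeval_C, ha]
    show x ^ p - (⟨x ^ p, hxp⟩ : F).val = 0
    simp
  have hdeg : (minpoly F x).degree = p := by
    rw [hmin]; exact Polynomial.degree_X_pow_sub_C hp.pos a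
  have hle := minpoly.degree_le_of_ne_zero F x hqne haev
  rw [hdeg, Polynomial.degree_eq_natDegree hqne] at hle
  have := natdeg_helper hp.pos c
  rw [← hq] at this
  exact absurd (Nat.cast_le.mp hle) (not_le.mpr this)

theorem exists_dual {E : Type*} [Field E] (F : Subfield E) (ι : Type*) [DecidableEq ι] {v : ι → E}
    (hli : LinearIndependent F v) (i0 : ι) :
    ∃ Λ : E →ₗ[F] F, ∀ k, Λ (v k) = if k = i0 then 1 else 0 := by
  classical
  obtain ⟨Q, hQ⟩ := (Submodule.span F (Set.range v)).exists_isCompl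
  let π := Submodule.linearProjOfIsCompl _ _ hQ
  let B := Module.Basis.span hli
  refine ⟨(B.coord i0).comp π, fun k => ?_⟩
  have h1 : π (v k) = B k := by
    have hmem : v k ∈ Submodule.span F (Set.range v) := Submodule.subset_span ⟨k, rfl⟩
    have h2 : π (v k) = ⟨v k, hmem⟩ := Submodule.linearProjOfIsCompl_apply_left hQ ⟨v k, hmem⟩
    rw [h2]; ext; simp [B, Module.Basis.span_apply]
  simp [h1, Module.Basis.coord_apply, Module.Basis.repr_self_apply, B, Finsupp.single_apply]

-- Lemma B
lemma double_li {E : Type*} [Field E] {p : ℕ} [Fact p.Prime] [CharP E p] (x y : E)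
    (hx : x ∉ (frobenius E p).fieldRange)
    (hy : y ∉ Subfield.closure (((frobenius E p).fieldRange : Subfield E) ∪ {x} : Set E)) :
    LinearIndependent ((frobenius E p).fieldRange)
      (fun mn : Fin p × Fin p => x ^ (mn.1 : ℕ) * y ^ (mn.2 : ℕ)) := by
  classical
  have hp : p.Prime := Fact.out
  set K : Subfield E := (frobenius E p).fieldRange with hK
  set L : Subfield E := Subfield.closure ((K : Set E) ∪ {x}) with hL
  have hmemK : ∀ t : E, t ^ p ∈ K := fun t => RingHom.mem_fieldRange.mpr ⟨t, rfl⟩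
  have hKL : ∀ t : E, t ∈ K → t ∈ L := fun t ht => Subfield.subset_closure (Or.inl ht)
  have hxL : x ∈ L := Subfield.subset_closure (Or.inr rfl)
  rw [Fintype.linearIndependent_iff]
  intro c hc
  have hsum : ∑ n : Fin p, (∑ m : Fin p, (c (m, n) : E) * x ^ (m : ℕ)) * y ^ (n : ℕ) = 0 := by
    rw [← hc, Fintype.sum_prod_type_right]
    refine Finset.sum_congr rfl fun n _ => ?_
    rw [Finset.sum_mul]
    refine Finset.sum_congr rfl fun m _ => ?_
    show (c (m, n) : E) * x ^ (m : ℕ) * y ^ (n : ℕ) = c (m, n) • (x ^ (m : ℕ) * y ^ (n : ℕ))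
    rw [mul_assoc]; rfl
  set g : Fin p → L := fun n => ⟨∑ m : Fin p, (c (m, n) : E) * x ^ (m : ℕ),
    Subfield.sum_mem L (fun m _ => Subfield.mul_mem L (hKL _ (c (m, n)).2)
      (Subfield.pow_mem L hxL _))⟩ with hg
  have hyli := pow_li hp L y (hKL _ (hmemK y)) hy
  rw [Fintype.linearIndependent_iff] at hyli
  have hgz : ∀ n, g n = 0 := hyli g (by
    rw [← hsum]
    refine Finset.sum_congr rfl fun n _ => ?_
    rfl)
  intro mn
  have hxli := pow_li hp K x (hmemK x) hx
  rw [Fintype.linearIndependent_iff] at hxli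
  have := hxli (fun m => c (m, mn.2)) (by
    have h1 := congrArg (Subfield.subtype L) (hgz mn.2)
    simp only [hg, Subfield.coe_subtype, ZeroMemClass.coe_zero] at h1
    rw [← h1]
    refine (Finset.sum_congr rfl fun m _ => ?_)
    rfl)
  exact this mn.1

lemma expand1 {E : Type*} [Field E] {p : ℕ} [Fact p.Prime] [CharP E p] (α β t : E)
    (ht : t ∈ (frobenius E p).fieldRange)
    (Λ : E →ₗ[((frobenius E p).fieldRange)] ((frobenius E p).fieldRange))
    (hΛ : ∀ mn : Fin p × Fin p,
      Λ ((α - t) ^ (mn.1 : ℕ) * β ^ (mn.2 : ℕ)) = if mn = (0, 0) then 1 else 0)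
    (m n : Fin p) :
    Λ (α ^ (m : ℕ) * β ^ (n : ℕ)) =
      if n = 0 then (⟨t, ht⟩ : ((frobenius E p).fieldRange)) ^ (m : ℕ) else 0 := by
  classical
  have hp : p.Prime := Fact.out
  haveI : NeZero p := ⟨hp.ne_zero⟩
  set T : ((frobenius E p).fieldRange) := ⟨t, ht⟩ with hT
  have hexp : α ^ (m : ℕ) * β ^ (n : ℕ) = ∑ k ∈ Finset.range ((m : ℕ) + 1),
      (T ^ ((m : ℕ) - k) * (((m : ℕ).choose k : ℕ) : ((frobenius E p).fieldRange))) • ((α - t) ^ k * β ^ (n : ℕ)) := by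
    have h1 : α ^ (m : ℕ)
        = ∑ k ∈ Finset.range ((m : ℕ) + 1), (α - t) ^ k * t ^ ((m : ℕ) - k) * ((m : ℕ).choose k) := by
      conv_lhs => rw [show α = (α - t) + t by ring]
      exact add_pow _ _ _
    rw [h1, Finset.sum_mul]
    refine Finset.sum_congr rfl fun k _ => ?_
    show _ = ((T ^ ((m : ℕ) - k) * (((m : ℕ).choose k : ℕ) : ((frobenius E p).fieldRange))) : E) * ((α - t) ^ k * β ^ (n : ℕ))
    push_cast [hT]
    ring
  rw [hexp, map_sum]
  have step : ∀ k ∈ Finset.range ((m : ℕ) + 1),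
      Λ ((T ^ ((m : ℕ) - k) * (((m : ℕ).choose k : ℕ) : ((frobenius E p).fieldRange))) • ((α - t) ^ k * β ^ (n : ℕ)))
      = if k = 0 ∧ n = 0 then T ^ ((m : ℕ) - k) * (((m : ℕ).choose k : ℕ) : ((frobenius E p).fieldRange)) else 0 := by
    intro k hk
    have hkp : k < p := lt_of_lt_of_le (Finset.mem_range.mp hk) m.isLt
    rw [map_smul, smul_eq_mul]
    have h2 := hΛ (⟨k, hkp⟩, n)
    simp only [Fin.val_mk] at h2
    rw [h2]
    have hcond : ((⟨k, hkp⟩ : Fin p), n) = ((0 : Fin p), (0 : Fin p)) ↔ (k = 0 ∧ n = 0) := by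
      rw [Prod.mk.injEq, Fin.ext_iff, Fin.val_mk, Fin.val_zero]
    by_cases h : k = 0 ∧ n = 0
    · rw [if_pos (hcond.mpr h), if_pos h, mul_one]
    · rw [if_neg (fun hh => h (hcond.mp hh)), if_neg h, mul_zero]
  rw [Finset.sum_congr rfl step]
  by_cases hn : n = 0
  · subst hn
    rw [if_pos rfl]
    rw [Finset.sum_eq_single_of_mem 0 (Finset.mem_range.mpr (Nat.succ_pos _))]
    · simp
    · intro b _ hb
      rw [if_neg (by simp [hb])]
  · rw [if_neg hn]
    refine Finset.sum_eq_zero fun k _ => if_neg (by simp [hn])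

lemma expand2 {E : Type*} [Field E] {p : ℕ} [Fact p.Prime] [CharP E p] (α β : E) (i j : Fin p)
    (hA : α ^ p ∈ (frobenius E p).fieldRange)
    (Λ : E →ₗ[((frobenius E p).fieldRange)] ((frobenius E p).fieldRange))
    (hΛ : ∀ mn : Fin p × Fin p,
      Λ (α ^ (mn.1 : ℕ) * (α ^ (i : ℕ) * β - ((j : ℕ) : E)) ^ (mn.2 : ℕ))
        = if mn = (0, 0) then 1 else 0)
    (m n : Fin p) :
    (⟨α ^ p, hA⟩ : ((frobenius E p).fieldRange)) ^ (n : ℕ) * Λ (α ^ (m : ℕ) * β ^ (n : ℕ)) =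
      if ((m : ℕ) + (p - (i : ℕ)) * (n : ℕ)) % p = 0 then
        (⟨α ^ p, hA⟩ : ((frobenius E p).fieldRange)) ^ (((m : ℕ) + (p - (i : ℕ)) * (n : ℕ)) / p)
          * (((j : ℕ) : ((frobenius E p).fieldRange))) ^ (n : ℕ)
      else 0 := by
  classical
  have hp : p.Prime := Fact.out
  haveI : NeZero p := ⟨hp.ne_zero⟩
  set A : ((frobenius E p).fieldRange) := ⟨α ^ p, hA⟩ with hAdef
  set z : E := α ^ (i : ℕ) * β - ((j : ℕ) : E) with hz
  set M : ℕ := (m : ℕ) + (p - (i : ℕ)) * (n : ℕ) with hM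
  set q : ℕ := M / p with hq
  set r : ℕ := M % p with hr
  have hrp : r < p := Nat.mod_lt _ hp.pos
  have hMe : p * q + r = M := Nat.div_add_mod M p
  have h3 : (p - (i : ℕ)) * (n : ℕ) + (i : ℕ) * (n : ℕ) = p * (n : ℕ) := by
    rw [← add_mul, Nat.sub_add_cancel i.isLt.le]
  have harith : p * q + r + (i : ℕ) * (n : ℕ) = (m : ℕ) + p * (n : ℕ) := by
    rw [hMe, hM, add_assoc, h3]
  have hexp : (α ^ p) ^ (n : ℕ) * (α ^ (m : ℕ) * β ^ (n : ℕ)) =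
      ∑ l ∈ Finset.range ((n : ℕ) + 1),
        (A ^ q * (((n : ℕ).choose l : ℕ) : ((frobenius E p).fieldRange))
          * (((j : ℕ) : ((frobenius E p).fieldRange))) ^ ((n : ℕ) - l)) • (α ^ r * z ^ l) := by
    have h4 : ∀ l ∈ Finset.range ((n : ℕ) + 1),
        (A ^ q * (((n : ℕ).choose l : ℕ) : ((frobenius E p).fieldRange))
          * (((j : ℕ) : ((frobenius E p).fieldRange))) ^ ((n : ℕ) - l)) • (α ^ r * z ^ l)
        = ((α ^ p) ^ q * α ^ r) * (z ^ l * ((j : ℕ) : E) ^ ((n : ℕ) - l) * ((n : ℕ).choose l)) := by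
      intro l _
      show ((A ^ q * _ * _ : ((frobenius E p).fieldRange)) : E) * (α ^ r * z ^ l) = _
      push_cast [hAdef]
      ring
    rw [Finset.sum_congr rfl h4, ← Finset.mul_sum, ← add_pow, sub_add_cancel, mul_pow, ← pow_mul]
    rw [← pow_mul, ← pow_mul]
    calc α ^ (p * (n : ℕ)) * (α ^ (m : ℕ) * β ^ (n : ℕ))
        = α ^ (p * (n : ℕ) + (m : ℕ)) * β ^ (n : ℕ) := by rw [pow_add]; ring
      _ = α ^ (p * q + r + (i : ℕ) * (n : ℕ)) * β ^ (n : ℕ) := by rw [harith, add_comm (m : ℕ)]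
      _ = α ^ (p * q) * α ^ r * (α ^ ((i : ℕ) * (n : ℕ)) * β ^ (n : ℕ)) := by
          rw [pow_add, pow_add]; ring
  have hcoeA : ((A ^ (n : ℕ) : ((frobenius E p).fieldRange)) : E) = (α ^ p) ^ (n : ℕ) := by
    push_cast [hAdef]; rfl
  have step : ∀ l ∈ Finset.range ((n : ℕ) + 1),
      Λ ((A ^ q * (((n : ℕ).choose l : ℕ) : ((frobenius E p).fieldRange))
          * (((j : ℕ) : ((frobenius E p).fieldRange))) ^ ((n : ℕ) - l)) • (α ^ r * z ^ l))
      = if r = 0 ∧ l = 0 then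
          A ^ q * (((n : ℕ).choose l : ℕ) : ((frobenius E p).fieldRange))
            * (((j : ℕ) : ((frobenius E p).fieldRange))) ^ ((n : ℕ) - l)
        else 0 := by
    intro l hl
    have hlp : l < p := lt_of_lt_of_le (Finset.mem_range.mp hl) n.isLt
    rw [map_smul, smul_eq_mul]
    have h2 := hΛ (⟨r, hrp⟩, ⟨l, hlp⟩)
    simp only [Fin.val_mk] at h2
    rw [h2]
    have hcond : ((⟨r, hrp⟩ : Fin p), (⟨l, hlp⟩ : Fin p)) = ((0 : Fin p), (0 : Fin p))
        ↔ (r = 0 ∧ l = 0) := by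
      simp [Prod.mk.injEq, Fin.ext_iff]
    by_cases h : r = 0 ∧ l = 0
    · rw [if_pos (hcond.mpr h), if_pos h, mul_one]
    · rw [if_neg (fun hh => h (hcond.mp hh)), if_neg h, mul_zero]
  have key : A ^ (n : ℕ) * Λ (α ^ (m : ℕ) * β ^ (n : ℕ))
      = Λ ((A ^ (n : ℕ)) • (α ^ (m : ℕ) * β ^ (n : ℕ))) := by
    rw [map_smul, smul_eq_mul]
  rw [key, show (A ^ (n : ℕ)) • (α ^ (m : ℕ) * β ^ (n : ℕ))
      = (α ^ p) ^ (n : ℕ) * (α ^ (m : ℕ) * β ^ (n : ℕ)) by rw [← hcoeA]; rfl, hexp, map_sum,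
    Finset.sum_congr rfl step]
  by_cases hriszero : r = 0
  · rw [if_pos hriszero]
    rw [Finset.sum_eq_single_of_mem 0 (Finset.mem_range.mpr (Nat.succ_pos _))]
    · rw [if_pos ⟨hriszero, rfl⟩]
      simp
    · intro b _ hb
      rw [if_neg (by simp [hb])]
  · rw [if_neg hriszero]
    refine Finset.sum_eq_zero fun l _ => if_neg (by simp [hriszero])

lemma cast_eq_iff {p : ℕ} [NeZero p] {a b : ℕ} (ha : a < p) (hb : b < p) :
    (a : ZMod p) = (b : ZMod p) ↔ a = b := by
  constructor
  · intro h
    rw [← ZMod.val_cast_of_lt ha, ← ZMod.val_cast_of_lt hb, h]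
  · intro h; rw [h]

lemma modcond {p : ℕ} (hp : p.Prime) (i m n : Fin p) :
    ((m : ℕ) + (p - (i : ℕ)) * (n : ℕ)) % p = 0 ↔ (m : ℕ) = ((i : ℕ) * (n : ℕ)) % p := by
  haveI : NeZero p := ⟨hp.ne_zero⟩
  set X : ℕ := (m : ℕ) + (p - (i : ℕ)) * (n : ℕ) with hX
  have hXe : X + (i : ℕ) * (n : ℕ) = (m : ℕ) + p * (n : ℕ) := by
    rw [hX, add_assoc, ← add_mul, Nat.sub_add_cancel i.isLt.le]
  have hz : (X : ZMod p) = ((m : ℕ) : ZMod p) - (((i : ℕ) * (n : ℕ) : ℕ) : ZMod p) := by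
    have h := congrArg (fun t : ℕ => (t : ZMod p)) hXe
    push_cast at h ⊢
    rw [ZMod.natCast_self] at h
    linear_combination h
  rw [← Nat.dvd_iff_mod_eq_zero, ← ZMod.natCast_eq_zero_iff, hz, sub_eq_zero,
    ← ZMod.natCast_mod ((i : ℕ) * (n : ℕ)) p]
  exact cast_eq_iff m.isLt (Nat.mod_lt _ hp.pos)

lemma coverage {p : ℕ} [Fact p.Prime] (n : Fin p) (hn : n ≠ 0) (m : Fin p) :
    ∃ i : Fin p, ((i : ℕ) * (n : ℕ)) % p = (m : ℕ) := by
  have hp : p.Prime := Fact.out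
  haveI : NeZero p := ⟨hp.ne_zero⟩
  have hnv : (n : ℕ) ≠ 0 := fun h => hn (Fin.ext (by simp [h]))
  have hn' : ((n : ℕ) : ZMod p) ≠ 0 := by
    rw [Ne, ZMod.natCast_eq_zero_iff]
    intro hdvd
    exact absurd (Nat.le_of_dvd (Nat.pos_of_ne_zero hnv) hdvd) (not_le.mpr n.isLt)
  set u : ZMod p := ((m : ℕ) : ZMod p) * ((n : ℕ) : ZMod p)⁻¹ with hu
  refine ⟨⟨u.val, u.val_lt⟩, ?_⟩
  have h1 : ((u.val * (n : ℕ) : ℕ) : ZMod p) = ((m : ℕ) : ZMod p) := by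
    push_cast
    rw [ZMod.natCast_rightInverse u, hu, mul_assoc, inv_mul_cancel₀ hn', mul_one]
  rw [Fin.val_mk]
  refine (cast_eq_iff (Nat.mod_lt _ hp.pos) m.isLt).mp ?_
  rw [ZMod.natCast_mod, h1]
set_option maxHeartbeats 2000000 in
/-- Let `E` be a field of characteristic `p > 0` and `α, β ∈ E` with `[E^p(α,β) : E^p] = p²`
(equivalently `α ∉ E^p` and `β ∉ E^p(α)`).  For `i, j ∈ {0, …, p-1}` define
`W i 0 = Span_{E^p}{(α - i)^m β^n : (m,n) ≠ (0,0)}` and, for `j ≠ 0`,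
`W i j = Span_{E^p}{α^m (α^i β - j)^n : (m,n) ≠ (0,0)}` (exponents `m, n ≤ p-1`, with `i, j`
interpreted in the prime field of `E`).  Then `⋂_{i,j} W i j = {0}`. -/
theorem iInf_W_eq_bot (E : Type*) [Field E] (p : ℕ) [Fact p.Prime] [CharP E p]
    (α β : E) (hα : α ∉ (frobenius E p).fieldRange)
    (hβ : β ∉ Subfield.closure (((frobenius E p).fieldRange : Subfield E) ∪ {α} : Set E)) :
    (⨅ i : Fin p, ⨅ j : Fin p, Submodule.span ((frobenius E p).fieldRange)
      (if j = 0 then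
        {v : E | ∃ m n : Fin p, (m, n) ≠ (0, 0) ∧
          v = (α - ((i : ℕ) : E)) ^ (m : ℕ) * β ^ (n : ℕ)}
      else
        {v : E | ∃ m n : Fin p, (m, n) ≠ (0, 0) ∧
          v = α ^ (m : ℕ) * (α ^ (i : ℕ) * β - ((j : ℕ) : E)) ^ (n : ℕ)})) = ⊥ := by
  classical
  have hp : p.Prime := Fact.out
  haveI : NeZero p := ⟨hp.ne_zero⟩
  haveI : CharP (↥((frobenius E p).fieldRange)) p :=
    ((Subfield.subtype _).charP_iff (Subfield.subtype ((frobenius E p).fieldRange)).injective p).mpr inferInstance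
  have hmemK : ∀ t : E, t ^ p ∈ (frobenius E p).fieldRange :=
    fun t => RingHom.mem_fieldRange.mpr ⟨t, rfl⟩
  have hnatK : ∀ n : ℕ, ((n : E)) ∈ (frobenius E p).fieldRange :=
    fun n => RingHom.mem_fieldRange.mpr ⟨(n : E), map_natCast (frobenius E p) n⟩
  have hα0 : α ≠ 0 := fun h => hα (by rw [h]; exact zero_mem _)
  rw [eq_bot_iff]
  intro x hx
  rw [Submodule.mem_bot]
  simp only [Submodule.mem_iInf] at hx
  have h00 := hx 0 0
  rw [if_pos rfl] at h00
  have hxspan : x ∈ Submodule.span ((frobenius E p).fieldRange)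
      (Set.range (fun mn : Fin p × Fin p => α ^ (mn.1 : ℕ) * β ^ (mn.2 : ℕ))) := by
    refine Submodule.span_mono ?_ h00
    rintro v ⟨m, n, -, rfl⟩
    exact ⟨(m, n), by simp⟩
  obtain ⟨c, hcx⟩ := (Submodule.mem_span_range_iff_exists_fun _).mp hxspan
  suffices hc0 : ∀ mn : Fin p × Fin p, c mn = 0 by
    rw [← hcx]
    exact Finset.sum_eq_zero fun mn _ => by rw [hc0 mn, zero_smul]
  -- Step 1 : the coefficients c (m, 0) vanish
  have step1 : ∀ m : Fin p, c (m, 0) = 0 := by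
    refine vanish hp (fun m => c (m, 0)) ?_
    intro iv
    have hαi : α - ((iv : ℕ) : E) ∉ (frobenius E p).fieldRange := by
      intro hmem
      refine hα ?_
      have h2 := add_mem hmem (hnatK iv)
      rwa [sub_add_cancel] at h2
    have hcls : Subfield.closure (((frobenius E p).fieldRange : Subfield E) ∪ {α - ((iv : ℕ) : E)} : Set E)
        ≤ Subfield.closure (((frobenius E p).fieldRange : Subfield E) ∪ {α} : Set E) := by
      rw [Subfield.closure_le]
      rintro v (hv | hv)
      · exact Subfield.subset_closure (Or.inl hv)
      · rw [Set.mem_singleton_iff] at hv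
        subst hv
        exact sub_mem (Subfield.subset_closure (Or.inr rfl))
          (Subfield.subset_closure (Or.inl (hnatK iv)))
    have hβi : β ∉ Subfield.closure (((frobenius E p).fieldRange : Subfield E) ∪ {α - ((iv : ℕ) : E)} : Set E) :=
      fun hmem => hβ (hcls hmem)
    have li := double_li (α - ((iv : ℕ) : E)) β hαi hβi
    obtain ⟨Λ, hΛ⟩ := exists_dual _ _ li ((0, 0) : Fin p × Fin p)
    have hxW := hx iv 0
    rw [if_pos rfl] at hxW
    have hker : Λ x = 0 := by
      have hle : Submodule.span ((frobenius E p).fieldRange)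
          {v : E | ∃ m n : Fin p, (m, n) ≠ (0, 0) ∧
            v = (α - ((iv : ℕ) : E)) ^ (m : ℕ) * β ^ (n : ℕ)} ≤ LinearMap.ker Λ := by
        rw [Submodule.span_le]
        rintro v ⟨m, n, hmn, rfl⟩
        rw [SetLike.mem_coe, LinearMap.mem_ker]
        have h5 : Λ ((α - ((iv : ℕ) : E)) ^ (m : ℕ) * β ^ (n : ℕ))
            = if (m, n) = ((0 : Fin p), (0 : Fin p)) then 1 else 0 := hΛ (m, n)
        rw [h5]
        exact if_neg hmn
      exact hle hxW
    have hΛx : Λ x = ∑ mn : Fin p × Fin p, c mn * Λ (α ^ (mn.1 : ℕ) * β ^ (mn.2 : ℕ)) := by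
      rw [← hcx, map_sum]
      exact Finset.sum_congr rfl fun mn _ => by rw [map_smul, smul_eq_mul]
    have hval : ∀ mn : Fin p × Fin p, Λ (α ^ (mn.1 : ℕ) * β ^ (mn.2 : ℕ)) =
        if mn.2 = 0 then (⟨((iv : ℕ) : E), hnatK iv⟩ : ((frobenius E p).fieldRange)) ^ (mn.1 : ℕ) else 0 :=
      fun mn => expand1 α β _ (hnatK iv) Λ (fun k => hΛ k) mn.1 mn.2
    have hTnat : (⟨((iv : ℕ) : E), hnatK iv⟩ : ((frobenius E p).fieldRange))
        = (((iv : ℕ)) : ((frobenius E p).fieldRange)) := by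
      refine Subtype.ext ?_
      simp
    calc ∑ m : Fin p, c (m, 0) * ((iv : ℕ) : ((frobenius E p).fieldRange)) ^ (m : ℕ)
        = ∑ mn : Fin p × Fin p, c mn * Λ (α ^ (mn.1 : ℕ) * β ^ (mn.2 : ℕ)) := by
          refine Eq.symm ?_
          rw [Fintype.sum_prod_type_right]
          have hrow : ∀ n : Fin p, (∑ m : Fin p, c (m, n) * Λ (α ^ (m : ℕ) * β ^ (n : ℕ)))
              = if n = 0 then ∑ m : Fin p, c (m, 0) * ((iv : ℕ) : ((frobenius E p).fieldRange)) ^ (m : ℕ) else 0 := by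
            intro n
            by_cases hn : n = 0
            · subst hn
              rw [if_pos rfl]
              refine Finset.sum_congr rfl fun m _ => ?_
              have h6 : Λ (α ^ (m : ℕ) * β ^ ((0 : Fin p) : ℕ))
                  = if (0 : Fin p) = 0 then (⟨((iv : ℕ) : E), hnatK iv⟩ : ((frobenius E p).fieldRange)) ^ (m : ℕ) else 0 :=
                hval (m, 0)
              rw [h6, if_pos rfl, hTnat]
            · rw [if_neg hn]
              refine Finset.sum_eq_zero fun m _ => ?_
              have h6 : Λ (α ^ (m : ℕ) * β ^ (n : ℕ))
                  = if n = 0 then (⟨((iv : ℕ) : E), hnatK iv⟩ : ((frobenius E p).fieldRange)) ^ (m : ℕ) else 0 :=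
                hval (m, n)
              rw [h6, if_neg hn, mul_zero]
          rw [Finset.sum_congr rfl (fun n _ => hrow n), Finset.sum_ite_eq' Finset.univ 0,
            if_pos (Finset.mem_univ _)]
      _ = 0 := by rw [← hΛx, hker]
  -- Step 2
  have step2 : ∀ (iv n : Fin p),
      c (⟨((iv : ℕ) * (n : ℕ)) % p, Nat.mod_lt _ hp.pos⟩, n) = 0 := by
    intro iv
    set A : ((frobenius E p).fieldRange) := (⟨α ^ p, hmemK α⟩ : ((frobenius E p).fieldRange)) with hA
    have hAne : A ≠ 0 := by
      intro h
      have h2 := congrArg (Subfield.subtype _) h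
      simp only [hA, Subfield.coe_subtype, map_zero] at h2
      exact pow_ne_zero p hα0 h2
    set σ : Fin p → Fin p := fun n => ⟨((iv : ℕ) * (n : ℕ)) % p, Nat.mod_lt _ hp.pos⟩ with hσ
    set d : Fin p → ((frobenius E p).fieldRange) := fun n =>
      c (σ n, n) * (A ^ (n : ℕ))⁻¹ * A ^ ((((σ n) : ℕ) + (p - (iv : ℕ)) * (n : ℕ)) / p) with hd
    have hdz : ∀ n, d n = 0 := by
      refine vanish hp d ?_
      intro j
      by_cases hj : j = 0
      · subst hj
        have hσ0 : σ 0 = 0 := Fin.ext (by simp [hσ])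
        have hsum0 : (∑ n : Fin p, d n * (((0 : Fin p) : ℕ) : ((frobenius E p).fieldRange)) ^ (n : ℕ)) = d 0 := by
          rw [Finset.sum_eq_single (0 : Fin p)]
          · simp
          · intro b _ hb
            have hbv : (b : ℕ) ≠ 0 := fun h => hb (Fin.ext (by simp [h]))
            simp [zero_pow hbv]
          · intro h
            exact absurd (Finset.mem_univ _) h
        rw [hsum0]
        have hd0 : d 0 = c (0, 0) := by
          rw [hd]
          simp only [hσ0, Fin.val_zero, pow_zero, inv_one, mul_one, Nat.mul_zero, Nat.zero_mod,
            Nat.add_zero, Nat.zero_div, Nat.mul_zero]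
        rw [hd0, step1 0]
      · set z : E := α ^ (iv : ℕ) * β - ((j : ℕ) : E) with hzdef
        have hzK : z ∉ Subfield.closure (((frobenius E p).fieldRange : Subfield E) ∪ {α} : Set E) := by
          intro hz
          apply hβ
          have hαL : α ∈ Subfield.closure (((frobenius E p).fieldRange : Subfield E) ∪ {α} : Set E) :=
            Subfield.subset_closure (Or.inr rfl)
          have hjL : ((j : ℕ) : E) ∈ Subfield.closure (((frobenius E p).fieldRange : Subfield E) ∪ {α} : Set E) :=
            Subfield.subset_closure (Or.inl (hnatK j))
          have h1 : α ^ (iv : ℕ) * β ∈ Subfield.closure (((frobenius E p).fieldRange : Subfield E) ∪ {α} : Set E) := by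
            have h2 := add_mem hz hjL
            rw [hzdef, sub_add_cancel] at h2
            exact h2
          have h2 := mul_mem (inv_mem (pow_mem hαL (iv : ℕ))) h1
          rwa [inv_mul_cancel_left₀ (pow_ne_zero _ hα0)] at h2
        have li := double_li α z hα hzK
        obtain ⟨Λ, hΛ⟩ := exists_dual _ _ li ((0, 0) : Fin p × Fin p)
        have hxW := hx iv j
        rw [if_neg hj] at hxW
        have hker : Λ x = 0 := by
          have hle : Submodule.span ((frobenius E p).fieldRange)
              {v : E | ∃ m n : Fin p, (m, n) ≠ (0, 0) ∧
                v = α ^ (m : ℕ) * (α ^ (iv : ℕ) * β - ((j : ℕ) : E)) ^ (n : ℕ)} ≤ LinearMap.ker Λ := by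
            rw [Submodule.span_le]
            rintro v ⟨m, n, hmn, rfl⟩
            rw [SetLike.mem_coe, LinearMap.mem_ker]
            have h5 : Λ (α ^ (m : ℕ) * (α ^ (iv : ℕ) * β - ((j : ℕ) : E)) ^ (n : ℕ))
                = if (m, n) = ((0 : Fin p), (0 : Fin p)) then 1 else 0 := hΛ (m, n)
            rw [h5]
            exact if_neg hmn
          exact hle hxW
        have hΛx : Λ x = ∑ mn : Fin p × Fin p, c mn * Λ (α ^ (mn.1 : ℕ) * β ^ (mn.2 : ℕ)) := by
          rw [← hcx, map_sum]
          exact Finset.sum_congr rfl fun mn _ => by rw [map_smul, smul_eq_mul]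
        have hval : ∀ mn : Fin p × Fin p, A ^ (mn.2 : ℕ) * Λ (α ^ (mn.1 : ℕ) * β ^ (mn.2 : ℕ)) =
            if ((mn.1 : ℕ) + (p - (iv : ℕ)) * (mn.2 : ℕ)) % p = 0 then
              A ^ (((mn.1 : ℕ) + (p - (iv : ℕ)) * (mn.2 : ℕ)) / p)
                * (((j : ℕ)) : ((frobenius E p).fieldRange)) ^ (mn.2 : ℕ)
            else 0 :=
          fun mn => expand2 α β iv j (hmemK α) Λ (fun k => hΛ k) mn.1 mn.2
        have hΛval : ∀ mn : Fin p × Fin p, Λ (α ^ (mn.1 : ℕ) * β ^ (mn.2 : ℕ)) =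
            (A ^ (mn.2 : ℕ))⁻¹ * (if ((mn.1 : ℕ) + (p - (iv : ℕ)) * (mn.2 : ℕ)) % p = 0 then
              A ^ (((mn.1 : ℕ) + (p - (iv : ℕ)) * (mn.2 : ℕ)) / p)
                * (((j : ℕ)) : ((frobenius E p).fieldRange)) ^ (mn.2 : ℕ)
            else 0) := by
          intro mn
          rw [← hval mn, inv_mul_cancel_left₀ (pow_ne_zero _ hAne)]
        have heq : ∑ mn : Fin p × Fin p, c mn * Λ (α ^ (mn.1 : ℕ) * β ^ (mn.2 : ℕ))
            = ∑ n : Fin p, d n * (((j : ℕ)) : ((frobenius E p).fieldRange)) ^ (n : ℕ) := by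
          rw [Fintype.sum_prod_type_right]
          refine Finset.sum_congr rfl fun n _ => ?_
          have hinner : ∀ m : Fin p, c (m, n) * Λ (α ^ (m : ℕ) * β ^ (n : ℕ))
              = if m = σ n then c (m, n) * (A ^ (n : ℕ))⁻¹
                  * A ^ (((m : ℕ) + (p - (iv : ℕ)) * (n : ℕ)) / p)
                  * (((j : ℕ)) : ((frobenius E p).fieldRange)) ^ (n : ℕ) else 0 := by
            intro m
            have h5 : Λ (α ^ (m : ℕ) * β ^ (n : ℕ)) =
                (A ^ (n : ℕ))⁻¹ * (if ((m : ℕ) + (p - (iv : ℕ)) * (n : ℕ)) % p = 0 then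
                  A ^ (((m : ℕ) + (p - (iv : ℕ)) * (n : ℕ)) / p)
                    * (((j : ℕ)) : ((frobenius E p).fieldRange)) ^ (n : ℕ)
                else 0) := hΛval (m, n)
            rw [h5]
            by_cases hc : ((m : ℕ) + (p - (iv : ℕ)) * (n : ℕ)) % p = 0
            · have hm : m = σ n := Fin.ext ((modcond hp iv m n).mp hc)
              rw [if_pos hc, if_pos hm]
              ring
            · have hm : ¬ (m = σ n) := fun h => hc ((modcond hp iv m n).mpr (by rw [h]))
              rw [if_neg hc, if_neg hm, mul_zero, mul_zero]
          rw [Finset.sum_congr rfl (fun m _ => hinner m), Finset.sum_ite_eq' Finset.univ (σ n),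
            if_pos (Finset.mem_univ _)]
        rw [← heq, ← hΛx, hker]
    intro n
    have h7 := hdz n
    rw [hd] at h7
    rcases mul_eq_zero.mp h7 with h8 | h8
    · rcases mul_eq_zero.mp h8 with h9 | h9
      · exact h9
      · exact absurd h9 (inv_ne_zero (pow_ne_zero _ hAne))
    · exact absurd h8 (pow_ne_zero _ hAne)
  intro mn
  obtain ⟨m, n⟩ := mn
  by_cases hn : n = 0
  · subst hn
    exact step1 m
  · obtain ⟨iv, hiv⟩ := coverage n hn m
    have h10 := step2 iv n
    have h11 : (⟨((iv : ℕ) * (n : ℕ)) % p, Nat.mod_lt _ hp.pos⟩ : Fin p) = m := Fin.ext hiv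
    rwa [h11] at h10
end

section
/- Let $E$ be a field of characteristic $p > 0$, $\alpha \in E \setminus E^p$, and $\beta \in E \setminus E^p(\alpha)$. For $i \in \{0, \dots, p-1\}$ let $W_{i,0} = \mathrm{Span}_{E^p}\{(\alpha - i)^m \beta^n : m,n \in \{0,\dots,p-1\}, (m,n) \neq (0,0)\}$. Then $\bigcap_{i=0}^{p-1} W_{i,0} = \mathrm{Span}_{E^p(\alpha)}\{\beta^k : k \in \{1, \dots, p-1\}\}$. -/
set_option maxHeartbeats 1000000
set_option synthInstance.maxHeartbeats 400000

open Polynomial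

section Aux

theorem minpoly_eq_aux (E : Type*) [Field E] (p : ℕ) [Fact p.Prime] [CharP E p]
    (F : Subfield E) (x : E) (hxp : x ^ p ∈ F) (hx : x ∉ F) :
    minpoly (↥F) x = X ^ p - C (⟨x ^ p, hxp⟩ : F) := by
  have hprime := Fact.out (p := p.Prime)
  have hirr : Irreducible (X ^ p - C (⟨x ^ p, hxp⟩ : F)) := by
    apply X_pow_sub_C_irreducible_of_prime hprime
    intro b hb
    apply hx
    have h1 : (b : E) ^ p = x ^ p := by
      have := congrArg Subtype.val hb; push_cast at this; exact this
    have h2 : (b : E) = x :=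
      frobenius_inj E p (by simpa [frobenius_def] using h1)
    exact h2 ▸ b.2
  refine (minpoly.eq_of_irreducible_of_monic hirr ?_ ?_).symm
  · rw [map_sub, map_pow, aeval_X, aeval_C, sub_eq_zero]; rfl
  · exact monic_X_pow_sub_C _ hprime.ne_zero

theorem minpoly_natDegree_aux (E : Type*) [Field E] (p : ℕ) [Fact p.Prime] [CharP E p]
    (F : Subfield E) (x : E) (hxp : x ^ p ∈ F) (hx : x ∉ F) :
    (minpoly (↥F) x).natDegree = p := by
  rw [minpoly_eq_aux E p F x hxp hx, natDegree_X_pow_sub_C]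

theorem indep_aux {E : Type*} [Field E] {p : ℕ} (K L : Subfield E) (hKL : K ≤ L)
    {α β : E} (hαL : α ∈ L)
    (hA : LinearIndependent (↥K) fun m : Fin p => α ^ (m : ℕ))
    (hB : LinearIndependent (↥L) fun n : Fin p => β ^ (n : ℕ)) :
    LinearIndependent (↥K) fun mn : Fin p × Fin p => α ^ (mn.1 : ℕ) * β ^ (mn.2 : ℕ) := by
  rw [Fintype.linearIndependent_iff] at hA hB ⊢
  intro g hg i
  have hL : ∀ n : Fin p, (∑ m : Fin p, (g (m, n) : E) * α ^ (m : ℕ)) ∈ L := fun n =>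
    sum_mem fun m _ => mul_mem (hKL (g (m, n)).2) (pow_mem hαL _)
  have key : ∀ n : Fin p,
      (⟨∑ m : Fin p, (g (m, n) : E) * α ^ (m : ℕ), hL n⟩ : ↥L) = 0 := by
    apply hB (fun n => ⟨_, hL n⟩)
    have : ∑ n : Fin p, (⟨∑ m : Fin p, (g (m, n) : E) * α ^ (m : ℕ), hL n⟩ : ↥L) • β ^ (n : ℕ)
        = ∑ mn : Fin p × Fin p, g mn • (α ^ (mn.1 : ℕ) * β ^ (mn.2 : ℕ)) := by
      rw [Fintype.sum_prod_type_right]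
      refine Finset.sum_congr rfl fun n _ => ?_
      show (∑ m : Fin p, (g (m, n) : E) * α ^ (m : ℕ)) * β ^ (n : ℕ) = _
      rw [Finset.sum_mul]
      exact Finset.sum_congr rfl fun m _ => by
        show _ = (g (m, n) : E) * (α ^ (m : ℕ) * β ^ (n : ℕ))
        ring
    rw [this, hg]
  have key2 : ∀ n : Fin p, ∑ m : Fin p, g (m, n) • α ^ (m : ℕ) = 0 := by
    intro n
    have := congrArg Subtype.val (key n)
    exact this
  exact hA (fun m => g (m, i.2)) (key2 i.2) i.1

theorem pow_expand {R : Type*} [CommRing R] (x y : R) {p m : ℕ} (hm : m < p) :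
    (x + y) ^ m = ∑ k : Fin p, (m.choose (k : ℕ) : R) * y ^ (m - (k : ℕ)) * x ^ (k : ℕ) := by
  rw [add_pow, Fin.sum_univ_eq_sum_range (fun k => (m.choose k : R) * y ^ (m - k) * x ^ k) p]
  rw [← Finset.sum_subset (Finset.range_subset_range.2 hm) (fun k _ hk => ?_)]
  · exact Finset.sum_congr rfl fun k _ => by ring
  · rw [Nat.choose_eq_zero_of_lt (by simpa using hk)]
    simp

theorem pow_mem_span {E : Type*} [Field E] {p : ℕ} (hp : 0 < p) {α : E} (K : Subfield E)
    (hαp : α ^ p ∈ K) :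
    ∀ m : ℕ, α ^ m ∈ Submodule.span (↥K) (Set.range fun k : Fin p => α ^ (k : ℕ)) := by
  intro m
  induction m using Nat.strong_induction_on with
  | _ m ih =>
    rcases lt_or_ge m p with h | h
    · exact Submodule.subset_span ⟨⟨m, h⟩, rfl⟩
    · have h1 : α ^ m = (⟨α ^ p, hαp⟩ : ↥K) • α ^ (m - p) := by
        show _ = α ^ p * α ^ (m - p)
        rw [← pow_add, Nat.add_sub_cancel' h]
      rw [h1]
      exact Submodule.smul_mem _ _ (ih (m - p) (by omega))

theorem mem_span_pow_of_mem_closure {E : Type*} [Field E] {p : ℕ} {α : E} (K : Subfield E)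
    (hαp : α ^ p ∈ K) (hp : 0 < p)
    {l : E} (hl : l ∈ Subfield.closure ((K : Set E) ∪ {α})) :
    l ∈ Submodule.span (↥K) (Set.range fun k : Fin p => α ^ (k : ℕ)) := by
  have hint : IsIntegral (↥K) α := by
    refine ⟨X ^ p - C (⟨α ^ p, hαp⟩ : ↥K), monic_X_pow_sub_C _ hp.ne', ?_⟩
    simp only [eval₂_sub, eval₂_pow, eval₂_X, eval₂_C, sub_eq_zero]; rfl
  have h1 : l ∈ IntermediateField.adjoin (↥K) {α} := by
    refine Subfield.closure_le.2 ?_ hl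
    rintro x (hx | rfl)
    · exact Subfield.subset_closure (Or.inl ⟨⟨x, hx⟩, rfl⟩)
    · exact Subfield.subset_closure (Or.inr rfl)
  have h2 : l ∈ Algebra.adjoin (↥K) {α} := by
    rw [← IntermediateField.adjoin_simple_toSubalgebra_of_isAlgebraic hint.isAlgebraic]
    exact h1
  rw [Algebra.adjoin_singleton_eq_range_aeval] at h2
  obtain ⟨q, (hq : aeval α q = l)⟩ := h2
  rw [← hq, aeval_eq_sum_range]
  exact Submodule.sum_mem _ fun i _ => Submodule.smul_mem _ _ (pow_mem_span hp K hαp i)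

end Aux

/-- Let `E` be a field of characteristic `p > 0`, `α ∈ E \ E^p`, `β ∈ E \ E^p(α)`. For
`0 ≤ i ≤ p-1` let `W i = Span_{E^p}{(α - i)^m β^n : 0 ≤ m,n ≤ p-1, (m,n) ≠ (0,0)}`. Then
`⋂ i W i = Span_{E^p(α)}{β^k : 1 ≤ k ≤ p-1}` (an equality of subsets of `E`). -/
theorem iInf_W_i_zero_eq_span (E : Type*) [Field E] (p : ℕ) [Fact p.Prime] [CharP E p]
    (α β : E) (hα : α ∉ (frobenius E p).fieldRange)
    (hβ : β ∉ Subfield.closure (((frobenius E p).fieldRange : Subfield E) ∪ {α} : Set E)) :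
    ((⨅ i : Fin p, Submodule.span ((frobenius E p).fieldRange)
        {v : E | ∃ m n : Fin p, (m, n) ≠ (0, 0) ∧
          v = (α - ((i : ℕ) : E)) ^ (m : ℕ) * β ^ (n : ℕ)} : Submodule _ E) : Set E) =
      ((Submodule.span (Subfield.closure
            (((frobenius E p).fieldRange : Subfield E) ∪ {α} : Set E))
          ((fun k : ℕ => β ^ k) '' {k : ℕ | 1 ≤ k ∧ k ≤ p - 1}) : Submodule _ E) : Set E) := by
  classical
  have hp : p.Prime := Fact.out
  have hp0 : 0 < p := hp.pos
  set K : Subfield E := (frobenius E p).fieldRange with hKdef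
  set L : Subfield E := Subfield.closure ((K : Set E) ∪ {α}) with hLdef
  have hmemK : ∀ x : E, x ^ p ∈ K := fun x => ⟨x, by rw [frobenius_def]⟩
  have hKL : K ≤ L := fun x hx => Subfield.subset_closure (Or.inl hx)
  have hαL : α ∈ L := Subfield.subset_closure (Or.inr rfl)
  -- linear independence of the products α^m β^n
  have mA : (minpoly (↥K) α).natDegree = p := minpoly_natDegree_aux E p K α (hmemK α) hα
  have mB : (minpoly (↥L) β).natDegree = p := minpoly_natDegree_aux E p L β (hKL (hmemK β)) hβ
  have hA : LinearIndependent (↥K) fun m : Fin p => α ^ (m : ℕ) := by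
    have := linearIndependent_pow (K := ↥K) (S := E) α
    rwa [mA] at this
  have hB : LinearIndependent (↥L) fun n : Fin p => β ^ (n : ℕ) := by
    have := linearIndependent_pow (K := ↥L) (S := E) β
    rwa [mB] at this
  have hv : LinearIndependent (↥K)
      fun mn : Fin p × Fin p => α ^ (mn.1 : ℕ) * β ^ (mn.2 : ℕ) :=
    indep_aux K L hKL hαL hA hB
  set v : Fin p × Fin p → E := fun mn => α ^ (mn.1 : ℕ) * β ^ (mn.2 : ℕ) with hvdef
  set V : Submodule (↥K) E := Submodule.span (↥K) (Set.range v) with hVdef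
  let B : Module.Basis (Fin p × Fin p) (↥K) (↥V) := Module.Basis.span hv
  have hBcoe : ∀ j : Fin p × Fin p, (B j : E) = v j := fun j => congrArg Subtype.val (Module.Basis.span_apply hv j)
  set T : Submodule (↥K) E :=
    Submodule.span (↥K) {w : E | ∃ m n : Fin p, n ≠ 0 ∧ w = α ^ (m : ℕ) * β ^ (n : ℕ)}
    with hTdef
  -- T is stable under multiplication by powers of α, hence by elements of L
  have hTpow : ∀ (m : ℕ) (n : Fin p), n ≠ 0 → α ^ m * β ^ (n : ℕ) ∈ T := by
    intro m
    induction m using Nat.strong_induction_on with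
    | _ m ih =>
      intro n hn
      rcases lt_or_ge m p with h | h
      · exact Submodule.subset_span ⟨⟨m, h⟩, n, hn, rfl⟩
      · have h1 : α ^ m * β ^ (n : ℕ) = (⟨α ^ p, hmemK α⟩ : ↥K) • (α ^ (m - p) * β ^ (n : ℕ)) := by
          show _ = α ^ p * (α ^ (m - p) * β ^ (n : ℕ))
          rw [← mul_assoc, ← pow_add, Nat.add_sub_cancel' h]
        rw [h1]
        exact Submodule.smul_mem _ _ (ih (m - p) (by omega) n hn)
  have hTmulα : ∀ (m : ℕ) (y : E), y ∈ T → α ^ m * y ∈ T := by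
    intro m y hy
    induction hy using Submodule.span_induction with
    | mem w hw =>
      obtain ⟨m', n, hn, rfl⟩ := hw
      rw [← mul_assoc, ← pow_add]
      exact hTpow _ n hn
    | zero => rw [mul_zero]; exact Submodule.zero_mem _
    | add a b ha hb iha ihb => rw [mul_add]; exact Submodule.add_mem _ iha ihb
    | smul c a ha iha =>
      have : α ^ m * (c • a) = c • (α ^ m * a) := by
        show α ^ m * ((c : E) * a) = (c : E) * (α ^ m * a); ring
      rw [this]
      exact Submodule.smul_mem _ _ iha
  have hTmulL : ∀ l : E, l ∈ L → ∀ y : E, y ∈ T → l * y ∈ T := by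
    intro l hl y hy
    have hl' := mem_span_pow_of_mem_closure K (hmemK α) hp0 hl
    clear hl
    induction hl' using Submodule.span_induction with
    | mem w hw => obtain ⟨k, rfl⟩ := hw; exact hTmulα _ y hy
    | zero => rw [zero_mul]; exact Submodule.zero_mem _
    | add a b ha hb iha ihb => rw [add_mul]; exact Submodule.add_mem _ iha ihb
    | smul c a ha iha =>
      have : (c • a) * y = c • (a * y) := smul_mul_assoc c a y
      rw [this]
      exact Submodule.smul_mem _ _ iha
  -- the right-hand side submodule
  set RHS : Submodule (↥L) E :=
    Submodule.span (↥L) ((fun k : ℕ => β ^ k) '' {k : ℕ | 1 ≤ k ∧ k ≤ p - 1}) with hRHSdef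
  have hRHSsubT : ∀ x : E, x ∈ RHS → x ∈ T := by
    intro x hx
    induction hx using Submodule.span_induction with
    | mem w hw =>
      obtain ⟨k, ⟨hk1, hk2⟩, rfl⟩ := hw
      have hkp : k < p := lt_of_le_of_lt hk2 (Nat.sub_lt hp0 one_pos)
      show β ^ k ∈ T
      have : β ^ k = α ^ ((0 : Fin p) : ℕ) * β ^ ((⟨k, hkp⟩ : Fin p) : ℕ) := by
        simp
      rw [this]
      exact Submodule.subset_span ⟨0, ⟨k, hkp⟩, by simp [Fin.ext_iff]; omega, rfl⟩
    | zero => exact Submodule.zero_mem _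
    | add a b ha hb iha ihb => exact Submodule.add_mem _ iha ihb
    | smul c a ha iha => exact hTmulL (c : E) c.2 a iha
  have hTsubRHS : ∀ x : E, x ∈ T → x ∈ RHS := by
    intro x hx
    induction hx using Submodule.span_induction with
    | mem w hw =>
      obtain ⟨m, n, hn, rfl⟩ := hw
      have hmem : β ^ (n : ℕ) ∈ RHS := by
        refine Submodule.subset_span ⟨(n : ℕ), ⟨?_, ?_⟩, rfl⟩
        · have : (n : ℕ) ≠ 0 := fun h => hn (Fin.val_eq_zero_iff.mp h)
          omega
        · have := n.isLt; omega
      have : α ^ (m : ℕ) * β ^ (n : ℕ) = (⟨α, hαL⟩ ^ (m : ℕ) : ↥L) • β ^ (n : ℕ) := by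
        show _ = ((⟨α, hαL⟩ ^ (m : ℕ) : ↥L) : E) * β ^ (n : ℕ)
        push_cast
        rfl
      rw [this]
      exact Submodule.smul_mem _ _ hmem
    | zero => exact Submodule.zero_mem _
    | add a b ha hb iha ihb => exact Submodule.add_mem _ iha ihb
    | smul c a ha iha =>
      have : c • a = (⟨(c : E), hKL c.2⟩ : ↥L) • a := rfl
      rw [this]
      exact Submodule.smul_mem _ _ iha
  -- the W submodules
  set W : Fin p → Submodule (↥K) E := fun i => Submodule.span (↥K)
      {w : E | ∃ m n : Fin p, (m, n) ≠ (0, 0) ∧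
        w = (α - ((i : ℕ) : E)) ^ (m : ℕ) * β ^ (n : ℕ)} with hWdef
  have hsmK : ∀ (c : ↥K) (w : E) (U : Submodule (↥K) E), w ∈ U → (c : E) * w ∈ U :=
    fun c w U hw => U.smul_mem c hw
  -- expansion of the generators of W i in terms of v
  have hexp : ∀ i m n : Fin p,
      (α - ((i : ℕ) : E)) ^ (m : ℕ) * β ^ (n : ℕ)
        = ∑ k : Fin p, (((((m : ℕ).choose (k : ℕ) : ↥K) *
            (-(((i : ℕ) : ↥K))) ^ ((m : ℕ) - (k : ℕ))) : ↥K) : E) * v (k, n) := by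
    intro i m n
    rw [sub_eq_add_neg, pow_expand α (-(((i : ℕ) : E))) m.isLt, Finset.sum_mul]
    refine Finset.sum_congr rfl fun k _ => ?_
    push_cast
    show _ = _ * (α ^ (k : ℕ) * β ^ (n : ℕ))
    ring
  have hWsubV : ∀ i : Fin p, W i ≤ V := by
    intro i
    rw [hWdef, Submodule.span_le]
    rintro w ⟨m, n, hmn, rfl⟩
    rw [SetLike.mem_coe, hexp i m n]
    exact Submodule.sum_mem _ fun k _ =>
      hsmK _ _ _ (Submodule.subset_span ⟨(k, n), rfl⟩)
  -- coordinate functionals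
  set g : Fin p → (Fin p × Fin p) → ↥K :=
    fun i j => if j.2 = 0 then (((i : ℕ)) : ↥K) ^ (j.1 : ℕ) else 0 with hgdef
  set φ : Fin p → (↥V →ₗ[↥K] ↥K) := fun i =>
    (Finsupp.linearCombination (↥K) (g i)).comp (B.repr : ↥V →ₗ[↥K] ((Fin p × Fin p) →₀ ↥K))
    with hφdef
  have hφB : ∀ (i : Fin p) (j : Fin p × Fin p), φ i (B j) = g i j := by
    intro i j
    simp [hφdef, LinearMap.comp_apply, Module.Basis.repr_self, Finsupp.linearCombination_single]
  have hrep : ∀ (i m n : Fin p) (h : (α - ((i : ℕ) : E)) ^ (m : ℕ) * β ^ (n : ℕ) ∈ V),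
      (⟨_, h⟩ : ↥V) = ∑ k : Fin p,
        (((m : ℕ).choose (k : ℕ) : ↥K) * (-(((i : ℕ) : ↥K))) ^ ((m : ℕ) - (k : ℕ))) • B (k, n) := by
    intro i m n h
    rw [Subtype.ext_iff, Submodule.coe_sum]
    simp only [SetLike.val_smul, hBcoe]
    rw [hexp i m n]
    exact Finset.sum_congr rfl fun k _ => rfl
  have hφgen : ∀ (i m n : Fin p), (m, n) ≠ (0, 0) →
      ∀ h : (α - ((i : ℕ) : E)) ^ (m : ℕ) * β ^ (n : ℕ) ∈ V, φ i ⟨_, h⟩ = 0 := by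
    intro i m n hmn h
    rw [hrep i m n h, map_sum]
    simp only [map_smul, hφB]
    by_cases hn : n = 0
    · subst hn
      have hm : (m : ℕ) ≠ 0 := by
        intro h0
        exact hmn (by simp [Prod.ext_iff, Fin.ext_iff, h0])
      have h0 : (((((i : ℕ)) : ↥K)) + (-((((i : ℕ)) : ↥K)))) ^ (m : ℕ) = 0 := by
        rw [add_neg_cancel]
        exact zero_pow hm
      rw [pow_expand _ _ m.isLt] at h0
      rw [← h0]
      exact Finset.sum_congr rfl fun k _ => rfl
    · simp [hgdef, hn]
  have hWker : ∀ i : Fin p, W i ≤ Submodule.map V.subtype (LinearMap.ker (φ i)) := by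
    intro i
    rw [hWdef, Submodule.span_le]
    rintro w ⟨m, n, hmn, rfl⟩
    have hwV : (α - ((i : ℕ) : E)) ^ (m : ℕ) * β ^ (n : ℕ) ∈ V :=
      hWsubV i (Submodule.subset_span ⟨m, n, hmn, rfl⟩)
    exact ⟨⟨_, hwV⟩, hφgen i m n hmn hwV, rfl⟩
  -- T is contained in every W i
  have hTsubW : ∀ i : Fin p, T ≤ W i := by
    intro i
    rw [hTdef, Submodule.span_le]
    rintro w ⟨m, n, hn, rfl⟩
    have hkey : α ^ (m : ℕ) * β ^ (n : ℕ) = ∑ k : Fin p,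
        ((((m : ℕ).choose (k : ℕ) : ↥K) * ((((i : ℕ)) : ↥K)) ^ ((m : ℕ) - (k : ℕ)) : ↥K) : E) *
          ((α - ((i : ℕ) : E)) ^ (k : ℕ) * β ^ (n : ℕ)) := by
      conv_lhs => rw [show α = (α - ((i : ℕ) : E)) + ((i : ℕ) : E) by ring]
      rw [pow_expand _ _ m.isLt, Finset.sum_mul]
      refine Finset.sum_congr rfl fun k _ => ?_
      push_cast
      ring
    rw [SetLike.mem_coe, hkey]
    refine Submodule.sum_mem _ fun k _ => hsmK _ _ _ (Submodule.subset_span ⟨k, n, ?_, rfl⟩)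
    simp [Prod.ext_iff, hn]
  -- finish
  ext x
  simp only [SetLike.mem_coe, Submodule.mem_iInf]
  constructor
  · intro hx
    have hx' : ∀ i : Fin p, x ∈ W i := hx
    have hxV : x ∈ V := hWsubV 0 (hx' 0)
    have hφx : ∀ i : Fin p, φ i ⟨x, hxV⟩ = 0 := by
      intro i
      obtain ⟨w, hw, hwx⟩ := hWker i (hx' i)
      have hwe : w = ⟨x, hxV⟩ := Subtype.ext hwx
      rw [← hwe]
      exact hw
    set c : Fin p → ↥K := fun m => B.repr ⟨x, hxV⟩ (m, 0) with hcdef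
    have hvand : ∀ i : Fin p, ∑ m : Fin p, c m * ((((i : ℕ)) : ↥K)) ^ (m : ℕ) = 0 := by
      intro i
      have h1 := hφx i
      rw [hφdef] at h1
      simp only [LinearMap.comp_apply, LinearEquiv.coe_coe] at h1
      rw [Finsupp.linearCombination_apply] at h1
      have h1' : ∑ j : Fin p × Fin p, (B.repr ⟨x, hxV⟩ j) • g i j = 0 := by
        rw [← h1]
        exact (Finsupp.sum_fintype (B.repr ⟨x, hxV⟩) (fun j a => a • g i j) (fun j => zero_smul _ _)).symm
      rw [Fintype.sum_prod_type] at h1'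
      have h2 : ∀ m : Fin p, (∑ n : Fin p, (B.repr ⟨x, hxV⟩ (m, n)) • g i (m, n))
          = c m * ((((i : ℕ)) : ↥K)) ^ (m : ℕ) := by
        intro m
        rw [Finset.sum_eq_single 0]
        · simp [hgdef, hcdef, smul_eq_mul]
        · intro b _ hb
          simp [hgdef, hb]
        · intro h; exact absurd (Finset.mem_univ 0) h
      rw [← h1']
      exact Finset.sum_congr rfl fun m _ => (h2 m).symm
    have hinj : Function.Injective (fun i : Fin p => (((i : ℕ)) : ↥K)) := by
      intro a b hab
      have hmod : (a : ℕ) ≡ (b : ℕ) [MOD p] :=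
        (CharP.natCast_eq_natCast (↥K) p).mp hab
      have := a.isLt
      have := b.isLt
      unfold Nat.ModEq at hmod
      rw [Nat.mod_eq_of_lt a.isLt, Nat.mod_eq_of_lt b.isLt] at hmod
      exact Fin.ext hmod
    have hc0 : c = 0 := Matrix.eq_zero_of_forall_index_sum_mul_pow_eq_zero hinj hvand
    have hxT : x ∈ T := by
      have hsum := Module.Basis.sum_repr B ⟨x, hxV⟩
      have hx2 : x = ∑ j : Fin p × Fin p, ((B.repr ⟨x, hxV⟩ j : ↥K) : E) * v j := by
        have hcoe := congrArg Subtype.val hsum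
        rw [Submodule.coe_sum] at hcoe
        simp only [SetLike.val_smul, hBcoe] at hcoe
        exact hcoe.symm
      rw [hx2]
      refine Submodule.sum_mem _ fun j _ => ?_
      rcases j with ⟨m, n⟩
      by_cases hn : n = 0
      · subst hn
        have hc : B.repr ⟨x, hxV⟩ (m, 0) = 0 := congrFun hc0 m
        rw [hc]
        simp
      · exact hsmK _ _ _ (Submodule.subset_span ⟨m, n, hn, rfl⟩)
    exact hTsubRHS x hxT
  · intro hx i
    exact hTsubW i (hRHSsubT x hx)
end

section
/- Let $E$ be a field of characteristic $p > 0$, $\alpha \in E \setminus E^p$, and $\beta \in E \setminus E^p(\alpha)$. Fix $i \in \{1, \dots, p-1\}$. Define $W_{0,0} = \mathrm{Span}_{E^p}\{\alpha^m \beta^n : (m,n) \neq (0,0),\ 0 \le m,n \le p-1\}$ and for $j \in \{1,\dots,p-1\}$, $W_{i,j} = \mathrm{Span}_{E^p}\{\alpha^m (\alpha^i\beta - j)^n : (m,n) \neq (0,0),\ 0 \le m,n \le p-1\}$. Then $W_{0,0} \cap \bigcap_{j=1}^{p-1} W_{i,j} = \mathrm{Span}_{E^p(\alpha^i\beta)}\{\alpha^k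 : k \in \{1, \dots, p-1\}\}$. -/
open Polynomial

theorem pow_indep (E : Type*) [Field E] (p : ℕ) [Fact p.Prime] [CharP E p]
    (F' : Subfield E) (hF' : ∀ x : E, x ^ p ∈ F') (θ : E) (hθ : θ ∉ F') :
    LinearIndependent ↥F' (fun n : Fin p => θ ^ (n : ℕ)) := by
  have hp : p.Prime := Fact.out
  set a : ↥F' := ⟨θ ^ p, hF' θ⟩ with ha
  have hroot : ∀ b : ↥F', b ^ p ≠ a := by
    rintro b hb
    apply hθ
    have : (b : E) ^ p = θ ^ p := congrArg Subtype.val hb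
    have hbθ : (b : E) = θ := by
      have h0 : ((b : E) - θ) ^ p = 0 := by rw [sub_pow_char, this, sub_self]
      exact sub_eq_zero.mp (pow_eq_zero_iff hp.ne_zero |>.mp h0)
    exact hbθ ▸ b.2
  have hirr : Irreducible (X ^ p - C a) := X_pow_sub_C_irreducible_of_prime hp hroot
  have hmin : minpoly ↥F' θ = X ^ p - C a := by
    refine (minpoly.eq_of_irreducible_of_monic hirr ?_ (monic_X_pow_sub_C _ hp.ne_zero)).symm
    show (aeval θ) (X ^ p - C a) = 0
    rw [map_sub, aeval_X_pow, aeval_C]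
    show θ ^ p - (a : E) = 0
    simp [a]
  have hdeg : (minpoly ↥F' θ).natDegree = p := by
    rw [hmin, natDegree_X_pow_sub_C]
  have := linearIndependent_pow (K := ↥F') (S := E) θ
  rw [hdeg] at this
  exact this

theorem prod_indep (E : Type*) [Field E] (p : ℕ) [Fact p.Prime] [CharP E p]
    (F' Fbig : Subfield E) (hle : F' ≤ Fbig) (hF' : ∀ x : E, x ^ p ∈ F')
    (α θ : E) (hα : α ∉ F') (hαbig : α ∈ Fbig) (hθ : θ ∉ Fbig) :
    LinearIndependent ↥F' (fun mn : Fin p × Fin p => α ^ (mn.1 : ℕ) * θ ^ (mn.2 : ℕ)) := by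
  have hbig : ∀ x : E, x ^ p ∈ Fbig := fun x => hle (hF' x)
  rw [Fintype.linearIndependent_iff]
  intro g hg
  have key : ∀ n : Fin p, (∑ m : Fin p, (g (m, n) : E) * α ^ (m : ℕ)) = 0 := by
    let G : Fin p → ↥Fbig := fun n =>
      ⟨∑ m : Fin p, (g (m, n) : E) * α ^ (m : ℕ),
        Subfield.sum_mem _ fun m _ => Subfield.mul_mem _ (hle (g (m, n)).2)
          (Subfield.pow_mem _ hαbig _)⟩
    intro n
    have h2 : ∑ n : Fin p, (G n) • θ ^ (n : ℕ) = 0 := by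
      rw [← hg, Fintype.sum_prod_type, Finset.sum_comm]
      refine Finset.sum_congr rfl fun n' _ => ?_
      show (∑ m : Fin p, (g (m, n') : E) * α ^ (m : ℕ)) * θ ^ (n':ℕ) = _
      rw [Finset.sum_mul]
      refine Finset.sum_congr rfl fun m _ => ?_
      show (g (m, n') : E) * α ^ (m:ℕ) * θ ^ (n':ℕ) = (g (m,n') : E) * (α ^ (m:ℕ) * θ ^ (n':ℕ))
      ring
    have := Fintype.linearIndependent_iff.mp
      (pow_indep E p Fbig hbig θ hθ) G h2 n
    simpa [G] using congrArg Subtype.val this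
  intro ⟨m, n⟩
  have := Fintype.linearIndependent_iff.mp
    (pow_indep E p F' hF' α hα) (fun m => g (m, n)) ?_ m
  · exact this
  · rw [← key n]
    exact Finset.sum_congr rfl fun m _ => rfl


theorem theta_pow_mem (E : Type*) [Field E] (p : ℕ) [Fact p.Prime]
    (F' : Subfield E) (hF' : ∀ x : E, x ^ p ∈ F') (θ : E) (k : ℕ) :
    θ ^ k ∈ Submodule.span ↥F' (Set.range fun n : Fin p => θ ^ (n : ℕ)) := by
  have hp : 0 < p := (Fact.out (p := p.Prime)).pos
  have hk : θ ^ k = (θ ^ p) ^ (k / p) * θ ^ (k % p) := by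
    conv_lhs => rw [← Nat.div_add_mod k p]
    rw [pow_add, pow_mul]
  rw [hk]
  have : (θ ^ p) ^ (k / p) ∈ F' := F'.pow_mem (hF' θ) _
  have hgen : θ ^ (k % p) ∈ Set.range fun n : Fin p => θ ^ (n : ℕ) :=
    ⟨⟨k % p, Nat.mod_lt _ hp⟩, rfl⟩
  exact Submodule.smul_mem _ (⟨_, this⟩ : ↥F') (Submodule.subset_span hgen)

theorem closure_le_span (E : Type*) [Field E] (p : ℕ) [Fact p.Prime]
    (F' : Subfield E) (hF' : ∀ x : E, x ^ p ∈ F') (θ : E) :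
    ∀ x ∈ Subfield.closure ((F' : Set E) ∪ {θ}),
      x ∈ Submodule.span ↥F' (Set.range fun n : Fin p => θ ^ (n : ℕ)) := by
  have hp : 0 < p := (Fact.out (p := p.Prime)).pos
  set S := Submodule.span ↥F' (Set.range fun n : Fin p => θ ^ (n : ℕ)) with hS
  have hmul : ∀ x ∈ S, ∀ y ∈ S, x * y ∈ S := by
    have h : S * S ≤ S := by
      rw [hS, Submodule.span_mul_span]
      refine Submodule.span_le.mpr ?_
      rintro z ⟨_, ⟨a, rfl⟩, _, ⟨b, rfl⟩, rfl⟩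
      show θ ^ (a : ℕ) * θ ^ (b : ℕ) ∈ _
      rw [← pow_add]
      exact theta_pow_mem E p F' hF' θ _
    intro x hx y hy; exact h (Submodule.mul_mem_mul hx hy)
  have hone : (1 : E) ∈ S := by simpa using theta_pow_mem E p F' hF' θ 0
  have hpow : ∀ x ∈ S, ∀ k : ℕ, x ^ k ∈ S := by
    intro x hx k
    induction k with
    | zero => simpa using hone
    | succ n ih => rw [pow_succ]; exact hmul _ ih _ hx
  have hinv : ∀ x ∈ S, x⁻¹ ∈ S := by
    intro x hx
    rcases eq_or_ne x 0 with rfl | hx0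
    · simpa using S.zero_mem
    · have hxp : x ^ p ≠ 0 := pow_ne_zero _ hx0
      have hinvF : (x ^ p)⁻¹ ∈ F' := F'.inv_mem (hF' x)
      have hxx : x ^ (p - 1) * x = x ^ p := by
        rw [← pow_succ, Nat.sub_add_cancel hp]
      have : x⁻¹ = (x ^ p)⁻¹ * x ^ (p - 1) := by
        refine inv_eq_of_mul_eq_one_right ?_
        rw [show x * ((x ^ p)⁻¹ * x ^ (p - 1)) = (x ^ p)⁻¹ * (x ^ (p - 1) * x) by ring,
          hxx, inv_mul_cancel₀ hxp]
      rw [this]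
      exact Submodule.smul_mem _ (⟨_, hinvF⟩ : ↥F') (hpow _ hx _)
  let Sfld : Subfield E :=
  { carrier := S
    zero_mem' := S.zero_mem
    one_mem' := hone
    add_mem' := fun h1 h2 => S.add_mem h1 h2
    mul_mem' := fun h1 h2 => hmul _ h1 _ h2
    neg_mem' := fun h => S.neg_mem h
    inv_mem' := hinv }
  intro x hx
  have hsub : ((F' : Set E) ∪ {θ}) ⊆ (Sfld : Set E) := by
    rintro y (hy | rfl)
    · show y ∈ S
      have h1 := Submodule.smul_mem S (⟨y, hy⟩ : ↥F') hone
      rwa [show ((⟨y, hy⟩ : ↥F') • (1 : E)) = y from mul_one y] at h1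
    · show y ∈ S
      simpa using theta_pow_mem E p F' hF' y 1
  exact (Subfield.closure_le.mpr hsub hx : x ∈ Sfld)


theorem bin_fin {R : Type*} [CommRing R] (θ c : R) (p n : ℕ) (hn : n < p) :
    (θ + c) ^ n = ∑ t : Fin p, (n.choose (t : ℕ) : R) * c ^ (n - (t : ℕ)) * θ ^ (t : ℕ) := by
  rw [add_pow, Fin.sum_univ_eq_sum_range (fun t => (n.choose t : R) * c ^ (n - t) * θ ^ t)]
  rw [← Finset.sum_subset (Finset.range_subset_range.mpr hn)]
  · exact Finset.sum_congr rfl fun k _ => by ring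
  · intro k _ hk
    rw [Nat.choose_eq_zero_of_lt (by simpa using hk)]
    ring

theorem frob_mem {E : Type*} [Field E] (p : ℕ) [Fact p.Prime] [CharP E p] (x : E) :
    x ^ p ∈ (frobenius E p).fieldRange := ⟨x, frobenius_def ..⟩

theorem alpha_red {E : Type*} [Field E] (p : ℕ) [Fact p.Prime] [CharP E p] (α : E) (a : ℕ) :
    ∃ u : ↥(frobenius E p).fieldRange,
      α ^ a = (u : E) * α ^ (a % p) ∧ (α ≠ 0 → (u : E) ≠ 0) := by
  refine ⟨⟨(α ^ p) ^ (a / p), Subfield.pow_mem _ (frob_mem p α) _⟩, ?_, ?_⟩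
  · show α ^ a = (α ^ p) ^ (a / p) * α ^ (a % p)
    conv_lhs => rw [← Nat.div_add_mod a p]
    rw [pow_add, pow_mul]
  · intro h0
    exact pow_ne_zero _ (pow_ne_zero _ h0)


set_option maxHeartbeats 1600000 in
set_option synthInstance.maxHeartbeats 400000 in
/-- Let `E` be a field of characteristic `p > 0`, `α ∈ E \ E^p`, `β ∈ E \ E^p(α)`, and fix
`i ∈ {1, …, p-1}`. With `W₀₀ = Span_{E^p}{α^m β^n : (m,n) ≠ (0,0)}` and, for `1 ≤ j ≤ p-1`,
`W i j = Span_{E^p}{α^m (α^i β - j)^n : (m,n) ≠ (0,0)}` (exponents `≤ p-1`), one has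
`W₀₀ ∩ ⋂_{j=1}^{p-1} W i j = Span_{E^p(αⁱβ)}{α^k : 1 ≤ k ≤ p-1}` as subsets of `E`. -/
theorem W00_inter_iInf_W_i_j_eq_span (E : Type*) [Field E] (p : ℕ) [Fact p.Prime] [CharP E p]
    (α β : E) (hα : α ∉ (frobenius E p).fieldRange)
    (hβ : β ∉ Subfield.closure (((frobenius E p).fieldRange : Subfield E) ∪ {α} : Set E))
    (i : Fin p) (hi : i ≠ 0) :
    ((Submodule.span ((frobenius E p).fieldRange)
        {v : E | ∃ m n : Fin p, (m, n) ≠ (0, 0) ∧ v = α ^ (m : ℕ) * β ^ (n : ℕ)} ⊓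
      ⨅ j : {j : Fin p // j ≠ 0}, Submodule.span ((frobenius E p).fieldRange)
        {v : E | ∃ m n : Fin p, (m, n) ≠ (0, 0) ∧
          v = α ^ (m : ℕ) * (α ^ (i : ℕ) * β - (((j : Fin p) : ℕ) : E)) ^ (n : ℕ)} :
        Submodule _ E) : Set E) =
      ((Submodule.span (Subfield.closure
            (((frobenius E p).fieldRange : Subfield E) ∪ {α ^ (i : ℕ) * β} : Set E))
          ((fun k : ℕ => α ^ k) '' {k : ℕ | 1 ≤ k ∧ k ≤ p - 1}) : Submodule _ E) : Set E) := by
  have hp : p.Prime := Fact.out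
  have hp1 : 1 < p := hp.one_lt
  set F := (frobenius E p).fieldRange with hFdef
  have hF : ∀ x : E, x ^ p ∈ F := fun x => ⟨x, frobenius_def ..⟩
  have hcast : ∀ k : ℕ, ((k : ℕ) : E) ∈ F := fun k => ⟨(k : E), map_natCast _ k⟩
  set γ : E := α ^ (i : ℕ) * β with hγdef
  set Fα := Subfield.closure ((F : Set E) ∪ {α}) with hFαdef
  have hFFα : ∀ x ∈ F, x ∈ Fα := fun x hx => Subfield.subset_closure (Or.inl hx)
  have hαFα : α ∈ Fα := Subfield.subset_closure (Or.inr rfl)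
  have hα0 : α ≠ 0 := by
    intro h
    apply hα
    have := hF 0
    rw [zero_pow hp.ne_zero] at this
    rwa [h]
  have hγFα : γ ∉ Fα := by
    intro h
    apply hβ
    have hβeq : β = (α ^ (i : ℕ))⁻¹ * γ := by
      rw [hγdef, ← mul_assoc, inv_mul_cancel₀ (pow_ne_zero _ hα0), one_mul]
    rw [hβeq]
    exact Fα.mul_mem (Fα.inv_mem (Fα.pow_mem hαFα _)) h
  have hγjFα : ∀ j : Fin p, γ - (((j : ℕ) : E)) ∉ Fα := by
    intro j h
    apply hγFα
    have := Fα.add_mem h (hFFα _ (hcast j))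
    simpa using this
  have hmulF : ∀ (c : E), c ∈ F → ∀ (M : Submodule ↥F E) (x : E), x ∈ M → c * x ∈ M :=
    fun c hc M x hx => M.smul_mem ⟨c, hc⟩ hx
  set bβ : Fin p × Fin p → E := fun mn => α ^ (mn.1 : ℕ) * β ^ (mn.2 : ℕ) with hbβdef
  set bj : Fin p → Fin p × Fin p → E :=
    fun j mn => α ^ (mn.1 : ℕ) * (γ - ((j : ℕ) : E)) ^ (mn.2 : ℕ) with hbjdef
  have hbj0 : ∀ mn : Fin p × Fin p, bj 0 mn = α ^ (mn.1 : ℕ) * γ ^ (mn.2 : ℕ) := by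
    intro mn; simp [hbjdef]
  have hindβ : LinearIndependent ↥F bβ :=
    prod_indep E p F Fα (fun x hx => hFFα x hx) hF α β hα hαFα hβ
  have hindj : ∀ j : Fin p, LinearIndependent ↥F (bj j) := fun j =>
    prod_indep E p F Fα (fun x hx => hFFα x hx) hF α _ hα hαFα (hγjFα j)
  set Lβ : Submodule ↥F E := Submodule.span ↥F (Set.range bβ) with hLβdef
  set Lj : Fin p → Submodule ↥F E := fun j => Submodule.span ↥F (Set.range (bj j)) with hLjdef
  -- monomial conversions
  have hconv1 : ∀ m n : Fin p, ∃ u : ↥F, (u : E) ≠ 0 ∧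
      α ^ (m : ℕ) * γ ^ (n : ℕ) = (u : E) * bβ (m + i * n, n) := by
    intro m n
    obtain ⟨u, hu1, hu2⟩ := alpha_red p α ((m : ℕ) + (i : ℕ) * (n : ℕ))
    refine ⟨u, hu2 hα0, ?_⟩
    have hmod : ((m : ℕ) + (i : ℕ) * (n : ℕ)) % p = ((m + i * n : Fin p) : ℕ) := by
      simp [Fin.val_add, Fin.val_mul, Nat.add_mod, Nat.mod_mod]
    have hγn : γ ^ (n : ℕ) = α ^ ((i : ℕ) * (n : ℕ)) * β ^ (n : ℕ) := by
      rw [hγdef, mul_pow, pow_mul]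
    rw [hγn, ← mul_assoc, ← pow_add, hu1, hmod]
    show _ = (u : E) * (α ^ ((m + i * n : Fin p) : ℕ) * β ^ (n : ℕ))
    ring
  have hconv2 : ∀ m n : Fin p, ∃ u : ↥F,
      bβ (m, n) = (u : E) * (α ^ ((m - i * n : Fin p) : ℕ) * γ ^ (n : ℕ)) := by
    intro m n
    obtain ⟨u, hu0, hu⟩ := hconv1 (m - i * n) n
    rw [sub_add_cancel] at hu
    refine ⟨⟨(u : E)⁻¹, F.inv_mem u.2⟩, ?_⟩
    show bβ (m, n) = (u : E)⁻¹ * _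
    rw [hu, inv_mul_cancel_left₀ hu0]
  have hshift : ∀ (θ c : E), c ∈ F → ∀ (M : Submodule ↥F E),
      ∀ m n : Fin p, (∀ t : Fin p, α ^ (m : ℕ) * θ ^ (t : ℕ) ∈ M) →
      α ^ (m : ℕ) * (θ + c) ^ (n : ℕ) ∈ M := by
    intro θ c hc M m n hM
    rw [bin_fin θ c p (n : ℕ) n.isLt, Finset.mul_sum]
    refine Submodule.sum_mem _ fun t _ => ?_
    have h1 : α ^ (m : ℕ) * (((n : ℕ).choose (t : ℕ) : E) * c ^ ((n : ℕ) - (t : ℕ)) * θ ^ (t : ℕ))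
        = (((n : ℕ).choose (t : ℕ) : E) * c ^ ((n : ℕ) - (t : ℕ))) * (α ^ (m : ℕ) * θ ^ (t : ℕ)) := by
      ring
    rw [h1]
    exact hmulF _ (F.mul_mem (hcast _) (F.pow_mem hc _)) _ _ (hM t)
  have hγβ_le : ∀ (m n : Fin p), α ^ (m : ℕ) * γ ^ (n : ℕ) ∈ Lβ := by
    intro m n
    obtain ⟨u, _, hu⟩ := hconv1 m n
    rw [hu]
    exact hmulF _ u.2 _ _ (Submodule.subset_span ⟨_, rfl⟩)
  have hβγ_le : Lβ ≤ Lj 0 := by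
    rw [hLβdef, Submodule.span_le]
    rintro v ⟨⟨m, n⟩, rfl⟩
    obtain ⟨u, hu⟩ := hconv2 m n
    show bβ (m, n) ∈ Lj 0
    rw [hu]
    refine hmulF _ u.2 _ _ ?_
    have : bj 0 ((m - i * n : Fin p), n) ∈ Lj 0 := Submodule.subset_span (Set.mem_range_self _)
    rwa [hbj0] at this
  have hγj_le : ∀ j : Fin p, ∀ (m n : Fin p), α ^ (m : ℕ) * γ ^ (n : ℕ) ∈ Lj j := by
    intro j m n
    have hγeq : γ = (γ - ((j : ℕ) : E)) + ((j : ℕ) : E) := by ring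
    rw [hγeq]
    exact hshift _ _ (hcast j) (Lj j) m n (fun t => Submodule.subset_span (Set.mem_range_self (m, t)))
  have hjγ_le : ∀ j : Fin p, Lj j ≤ Lj 0 := by
    intro j
    rw [hLjdef, Submodule.span_le]
    rintro v ⟨⟨m, n⟩, rfl⟩
    show bj j (m, n) ∈ Lj 0
    have hsub : γ - ((j : ℕ) : E) = γ + (-((j : ℕ) : E)) := by ring
    show α ^ (m : ℕ) * (γ - ((j : ℕ) : E)) ^ (n : ℕ) ∈ Lj 0
    rw [hsub]
    refine hshift _ _ (F.neg_mem (hcast j)) (Lj 0) m n (fun t => ?_)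
    have : bj 0 (m, t) ∈ Lj 0 := Submodule.subset_span (Set.mem_range_self _)
    rwa [hbj0] at this
  have hLj : ∀ j : Fin p, Lj j = Lβ := by
    intro j
    refine le_antisymm ?_ ?_
    · refine le_trans (hjγ_le j) ?_
      rw [hLjdef, Submodule.span_le]
      rintro v ⟨⟨m, n⟩, rfl⟩
      rw [hbj0]
      exact hγβ_le m n
    · refine le_trans hβγ_le ?_
      rw [hLjdef, Submodule.span_le]
      rintro v ⟨⟨m, n⟩, rfl⟩
      rw [hbj0]
      exact hγj_le j m n
  -- the middle module M
  set M : Submodule ↥F E :=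
    Submodule.span ↥F {v : E | ∃ m n : Fin p, m ≠ 0 ∧ v = α ^ (m : ℕ) * γ ^ (n : ℕ)} with hMdef
  set K' := Subfield.closure ((F : Set E) ∪ {γ}) with hK'def
  have hFK' : ∀ x ∈ F, x ∈ K' := fun x hx => Subfield.subset_closure (Or.inl hx)
  have hγK' : γ ∈ K' := Subfield.subset_closure (Or.inr rfl)
  have hγpowM : ∀ (m : Fin p), m ≠ 0 → ∀ k : ℕ, α ^ (m : ℕ) * γ ^ k ∈ M := by
    intro m hm k
    obtain ⟨u, hu1, _⟩ := alpha_red p γ k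
    have h1 : α ^ (m : ℕ) * γ ^ k = (u : E) * (α ^ (m : ℕ) * γ ^ (k % p)) := by
      rw [hu1]; ring
    rw [h1]
    refine hmulF _ u.2 _ _ (Submodule.subset_span ?_)
    exact ⟨m, ⟨k % p, Nat.mod_lt _ hp.pos⟩, hm, rfl⟩
  have hMstab : ∀ c ∈ K', ∀ x ∈ M, c * x ∈ M := by
    intro c hc x hx
    have hc' : c ∈ Submodule.span ↥F (Set.range fun n : Fin p => γ ^ (n : ℕ)) :=
      closure_le_span E p F hF γ c hc
    clear hc
    induction hc' using Submodule.span_induction with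
    | mem c' hc' =>
      obtain ⟨t, rfl⟩ := hc'
      induction hx using Submodule.span_induction with
      | mem v hv =>
        obtain ⟨m, n, hm, rfl⟩ := hv
        have h1 : γ ^ (t : ℕ) * (α ^ (m : ℕ) * γ ^ (n : ℕ))
            = α ^ (m : ℕ) * γ ^ ((t : ℕ) + (n : ℕ)) := by rw [pow_add]; ring
        rw [h1]
        exact hγpowM m hm _
      | zero => rw [mul_zero]; exact M.zero_mem
      | add y z _ _ hy hz => rw [mul_add]; exact M.add_mem hy hz
      | smul r y _ hy =>
        have h1 : γ ^ (t : ℕ) * (r • y) = (r : E) * (γ ^ (t : ℕ) * y) := by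
          show γ ^ (t : ℕ) * ((r : E) * y) = _; ring
        rw [h1]; exact hmulF _ r.2 _ _ hy
    | zero => rw [zero_mul]; exact M.zero_mem
    | add a b _ _ ha hb => rw [add_mul]; exact M.add_mem ha hb
    | smul r a _ ha =>
      have h1 : (r • a) * x = (r : E) * (a * x) := by
        show ((r : E) * a) * x = _; ring
      rw [h1]; exact hmulF _ r.2 _ _ ha
  have hR_to_M : ∀ x ∈ Submodule.span ↥K'
      ((fun k : ℕ => α ^ k) '' {k : ℕ | 1 ≤ k ∧ k ≤ p - 1}), x ∈ M := by
    intro x hx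
    induction hx using Submodule.span_induction with
    | mem v hv =>
      obtain ⟨k, ⟨hk1, hk2⟩, rfl⟩ := hv
      have hkp : k < p := lt_of_le_of_lt hk2 (by omega)
      refine Submodule.subset_span ⟨⟨k, hkp⟩, 0, ?_, ?_⟩
      · intro h
        have : k = 0 := congrArg Fin.val h
        omega
      · simp
    | zero => exact M.zero_mem
    | add a b _ _ ha hb => exact M.add_mem ha hb
    | smul r a _ ha => exact hMstab _ r.2 _ ha
  have hM_to_R : ∀ x ∈ M, x ∈ Submodule.span ↥K'
      ((fun k : ℕ => α ^ k) '' {k : ℕ | 1 ≤ k ∧ k ≤ p - 1}) := by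
    intro x hx
    induction hx using Submodule.span_induction with
    | mem v hv =>
      obtain ⟨m, n, hm, rfl⟩ := hv
      have h1 : α ^ (m : ℕ) * γ ^ (n : ℕ)
          = (⟨γ ^ (n : ℕ), K'.pow_mem hγK' _⟩ : ↥K') • α ^ (m : ℕ) := by
        show _ = γ ^ (n : ℕ) * α ^ (m : ℕ); ring
      rw [h1]
      refine Submodule.smul_mem _ _ (Submodule.subset_span ⟨(m : ℕ), ⟨?_, ?_⟩, rfl⟩)
      · have : (m : ℕ) ≠ 0 := fun h => hm (Fin.ext (by simpa using h))
        omega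
      · have := m.isLt; omega
    | zero => exact Submodule.zero_mem _
    | add a b _ _ ha hb => exact Submodule.add_mem _ ha hb
    | smul r a _ ha =>
      have h1 : r • a = (⟨(r : E), hFK' _ r.2⟩ : ↥K') • a := rfl
      rw [h1]; exact Submodule.smul_mem _ _ ha
  have hM_W00 : ∀ x ∈ M, x ∈ Submodule.span ↥F
      {v : E | ∃ m n : Fin p, (m, n) ≠ (0, 0) ∧ v = α ^ (m : ℕ) * β ^ (n : ℕ)} := by
    intro x hx
    refine Submodule.span_le.mpr ?_ hx
    rintro v ⟨m, n, hm, rfl⟩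
    obtain ⟨u, _, hu⟩ := hconv1 m n
    rw [hu]
    refine hmulF _ u.2 _ _ (Submodule.subset_span ⟨m + i * n, n, ?_, rfl⟩)
    intro h
    rw [Prod.mk.injEq] at h
    apply hm
    rw [← h.1, h.2]
    simp
  have hM_Wj : ∀ (j : Fin p), ∀ x ∈ M, x ∈ Submodule.span ↥F
      {v : E | ∃ m n : Fin p, (m, n) ≠ (0, 0) ∧
        v = α ^ (m : ℕ) * (γ - ((j : ℕ) : E)) ^ (n : ℕ)} := by
    intro j x hx
    refine Submodule.span_le.mpr ?_ hx
    rintro v ⟨m, n, hm, rfl⟩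
    rw [show α ^ (m : ℕ) * γ ^ (n : ℕ)
        = α ^ (m : ℕ) * ((γ - ((j : ℕ) : E)) + ((j : ℕ) : E)) ^ (n : ℕ) by
      rw [sub_add_cancel]]
    refine hshift _ _ (hcast j) _ m n (fun t => Submodule.subset_span ⟨m, t, ?_, rfl⟩)
    intro h
    rw [Prod.mk.injEq] at h
    exact hm h.1
  -- bases
  let Bj : (j : Fin p) → Module.Basis (Fin p × Fin p) ↥F ↥Lβ := fun j =>
    (Module.Basis.span (hindj j)).map (LinearEquiv.ofEq _ _ (hLj j))
  have hBcoe : ∀ (j : Fin p) (mn : Fin p × Fin p), ((Bj j mn : ↥Lβ) : E) = bj j mn := by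
    intro j mn
    simp [Bj, Module.Basis.span_apply]
  have hcoord : ∀ (j : Fin p) (s : Set E),
      (∀ v ∈ s, ∃ (idx : Fin p × Fin p) (u : ↥F), idx ≠ (0, 0) ∧ v = (u : E) * bj j idx) →
      ∀ x (hx : x ∈ Submodule.span ↥F s) (hxL : x ∈ Lβ),
        (Bj j).repr ⟨x, hxL⟩ (0, 0) = 0 := by
    intro j s hs x hx hxL
    set φ : ↥Lβ →ₗ[↥F] ↥F := (Bj j).coord (0, 0) with hφ
    have hsub : Submodule.span ↥F s ≤ Submodule.map Lβ.subtype (LinearMap.ker φ) := by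
      rw [Submodule.span_le]
      intro v hv
      obtain ⟨idx, u, hne, rfl⟩ := hs v hv
      refine Submodule.mem_map.mpr ⟨u • Bj j idx, ?_, ?_⟩
      · rw [LinearMap.mem_ker, map_smul, hφ, Module.Basis.coord_apply, Module.Basis.repr_self]
        rw [Finsupp.single_eq_of_ne' hne, smul_zero]
      · show ((u • Bj j idx : ↥Lβ) : E) = (u : E) * bj j idx
        rw [← hBcoe j idx]; rfl
    obtain ⟨y, hy, hyx⟩ := hsub hx
    have hyX : y = ⟨x, hxL⟩ := Subtype.ext hyx
    have hy2 : φ y = 0 := LinearMap.mem_ker.mp hy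
    rw [hφ, Module.Basis.coord_apply] at hy2
    rw [← hyX]
    exact hy2
  have hexp : ∀ (j : Fin p) (m n : Fin p),
      Bj 0 (m, n) = ∑ t : Fin p,
        (⟨((n : ℕ).choose (t : ℕ) : E) * ((j : ℕ) : E) ^ ((n : ℕ) - (t : ℕ)),
          F.mul_mem (hcast _) (F.pow_mem (hcast j) _)⟩ : ↥F) • Bj j (m, t) := by
    intro j m n
    apply Subtype.ext
    rw [AddSubmonoidClass.coe_finset_sum]
    rw [hBcoe, hbj0]
    have hterm : ∀ t : Fin p,
        (((⟨((n : ℕ).choose (t : ℕ) : E) * ((j : ℕ) : E) ^ ((n : ℕ) - (t : ℕ)),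
          F.mul_mem (hcast _) (F.pow_mem (hcast j) _)⟩ : ↥F) • Bj j (m, t) : ↥Lβ) : E)
        = (((n : ℕ).choose (t : ℕ) : E) * ((j : ℕ) : E) ^ ((n : ℕ) - (t : ℕ))) * bj j (m, t) :=
      fun t => by rw [← hBcoe j (m, t)]; rfl
    rw [Finset.sum_congr rfl (fun t _ => hterm t)]
    rw [show α ^ ((m, n).1 : ℕ) * γ ^ ((m, n).2 : ℕ)
        = α ^ (m : ℕ) * ((γ - ((j : ℕ) : E)) + ((j : ℕ) : E)) ^ (n : ℕ) by
      rw [sub_add_cancel]]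
    rw [bin_fin _ _ p (n : ℕ) n.isLt, Finset.mul_sum]
    refine Finset.sum_congr rfl fun t _ => ?_
    show α ^ (m : ℕ) * (((n : ℕ).choose (t : ℕ) : E) * ((j : ℕ) : E) ^ ((n : ℕ) - (t : ℕ))
        * (γ - ((j : ℕ) : E)) ^ (t : ℕ)) = _ * (α ^ (m : ℕ) * (γ - ((j : ℕ) : E)) ^ (t : ℕ))
    ring
  have hrepr : ∀ (j : Fin p) (y : ↥Lβ),
      (Bj j).repr y (0, 0) = ∑ n : Fin p, (Bj 0).repr y (0, n) *
        (⟨((j : ℕ) : E), hcast j⟩ : ↥F) ^ (n : ℕ) := by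
    intro j y
    conv_lhs => rw [← (Bj 0).sum_repr y]
    rw [map_sum, Finsupp.finset_sum_apply]
    have hterm : ∀ mn : Fin p × Fin p,
        ((Bj j).repr ((Bj 0).repr y mn • Bj 0 mn)) (0, 0)
        = (Bj 0).repr y mn *
          (if mn.1 = 0 then (⟨((j : ℕ) : E), hcast j⟩ : ↥F) ^ ((mn.2 : ℕ)) else 0) := by
      rintro ⟨m, n⟩
      rw [map_smul, Finsupp.smul_apply, smul_eq_mul]
      congr 1
      rw [hexp j m n, map_sum, Finsupp.finset_sum_apply]
      rw [Finset.sum_congr rfl (fun t _ => by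
        rw [map_smul, Module.Basis.repr_self, Finsupp.smul_apply, smul_eq_mul])]
      by_cases hm : m = 0
      · subst hm
        rw [if_pos rfl]
        rw [Finset.sum_eq_single (0 : Fin p) ?_ (by simp)]
        · rw [show ((0 : Fin p), (0 : Fin p)) = (((0 : Fin p), 0) : Fin p × Fin p) from rfl]
          rw [Finsupp.single_eq_same]
          apply Subtype.ext
          push_cast
          simp
        · intro t _ ht
          rw [Finsupp.single_eq_of_ne' (by simp [ht]), mul_zero]
      · rw [if_neg hm]
        refine Finset.sum_eq_zero fun t _ => ?_
        rw [Finsupp.single_eq_of_ne' (by simp [hm]), mul_zero]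
    rw [Finset.sum_congr rfl (fun mn _ => hterm mn)]
    rw [Fintype.sum_prod_type]
    rw [Finset.sum_eq_single (0 : Fin p) ?_ (by simp)]
    · exact Finset.sum_congr rfl fun n _ => by rw [if_pos rfl]
    · intro m _ hm
      refine Finset.sum_eq_zero fun n _ => ?_
      rw [if_neg hm, mul_zero]
  ext x
  constructor
  · -- hard direction : LHS → RHS, via M
    intro hx
    rw [SetLike.mem_coe, Submodule.mem_inf] at hx
    obtain ⟨hx0, hxj⟩ := hx
    rw [Submodule.mem_iInf] at hxj
    have hxL : x ∈ Lβ := by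
      refine Submodule.span_le.mpr ?_ hx0
      rintro v ⟨m, n, _, rfl⟩
      exact Submodule.subset_span (Set.mem_range_self (m, n))
    have hC : ∀ j : Fin p, (Bj j).repr ⟨x, hxL⟩ (0, 0) = 0 := by
      intro j
      by_cases hj : j = 0
      · subst hj
        refine hcoord 0 _ ?_ x hx0 hxL
        rintro v ⟨m, n, hmn, rfl⟩
        obtain ⟨u, hu⟩ := hconv2 m n
        refine ⟨(m - i * n, n), u, ?_, ?_⟩
        · intro h
          rw [Prod.mk.injEq] at h
          apply hmn
          rw [Prod.mk.injEq]
          refine ⟨?_, h.2⟩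
          have h1 := h.1
          rw [h.2] at h1
          simpa using h1
        · show bβ (m, n) = (u : E) * bj 0 (m - i * n, n)
          rw [hbj0]
          exact hu
      · have hxj' := hxj ⟨j, hj⟩
        refine hcoord j _ ?_ x hxj' hxL
        rintro v ⟨m, n, hmn, rfl⟩
        exact ⟨(m, n), 1, hmn, by rw [OneMemClass.coe_one, one_mul]⟩
    set c : Fin p → ↥F := fun n => (Bj 0).repr ⟨x, hxL⟩ (0, n) with hcdef
    set f : Polynomial ↥F := ∑ n : Fin p, Polynomial.C (c n) * Polynomial.X ^ (n : ℕ)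
      with hfdef
    have hfeval : ∀ j : Fin p, f.eval ((⟨((j : ℕ) : E), hcast j⟩ : ↥F)) = 0 := by
      intro j
      rw [hfdef, Polynomial.eval_finset_sum]
      simp only [Polynomial.eval_mul, Polynomial.eval_C, Polynomial.eval_pow, Polynomial.eval_X]
      rw [← hrepr j ⟨x, hxL⟩]
      exact hC j
    have hfdeg : f.natDegree < p := by
      refine lt_of_le_of_lt (Polynomial.natDegree_sum_le_of_forall_le _ _ fun n _ => ?_)
        (show p - 1 < p by omega)
      refine le_trans (Polynomial.natDegree_C_mul_le _ _) ?_
      rw [Polynomial.natDegree_X_pow]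
      have := n.isLt; omega
    have hinj : Function.Injective (fun j : Fin p => (⟨((j : ℕ) : E), hcast j⟩ : ↥F)) := by
      intro a b hab
      have h1 : ((a : ℕ) : E) = ((b : ℕ) : E) := congrArg Subtype.val hab
      exact Fin.ext (CharP.natCast_injOn_Iio E p (Set.mem_Iio.mpr a.isLt)
        (Set.mem_Iio.mpr b.isLt) h1)
    have hf0 : f = 0 :=
      Polynomial.eq_zero_of_natDegree_lt_card_of_eval_eq_zero f hinj hfeval
        (by simpa using hfdeg)
    have hc0 : ∀ n : Fin p, c n = 0 := by
      intro n
      have h1 : f.coeff (n : ℕ) = c n := by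
        rw [hfdef, Polynomial.finset_sum_coeff]
        rw [Finset.sum_congr rfl (fun k _ => by
          rw [Polynomial.coeff_C_mul, Polynomial.coeff_X_pow])]
        rw [Finset.sum_eq_single n (fun k _ hk => by
          rw [if_neg (fun h => hk (Fin.ext h.symm)), mul_zero]) (by simp)]
        rw [if_pos rfl, mul_one]
      rw [hf0, Polynomial.coeff_zero] at h1
      exact h1.symm
    have hxM : x ∈ M := by
      have hX : x = ∑ mn : Fin p × Fin p, ((Bj 0).repr ⟨x, hxL⟩ mn : E) * bj 0 mn := by
        conv_lhs => rw [show x = ((⟨x, hxL⟩ : ↥Lβ) : E) from rfl, ← (Bj 0).sum_repr ⟨x, hxL⟩]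
        rw [AddSubmonoidClass.coe_finset_sum]
        exact Finset.sum_congr rfl fun mn _ => by rw [← hBcoe 0 mn]; rfl
      rw [hX]
      refine Submodule.sum_mem _ fun mn _ => ?_
      rcases eq_or_ne mn.1 0 with h0 | h0
      · have h1 : (Bj 0).repr ⟨x, hxL⟩ mn = 0 := by
          have h2 := hc0 mn.2
          rw [hcdef] at h2
          rwa [show mn = (0, mn.2) from Prod.ext h0 rfl]
        rw [h1]
        simpa using M.zero_mem
      · exact hmulF _ ((Bj 0).repr ⟨x, hxL⟩ mn).2 _ _
          (Submodule.subset_span ⟨mn.1, mn.2, h0, (hbj0 mn).symm ▸ rfl⟩)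
    rw [SetLike.mem_coe]
    exact hM_to_R x hxM
  · -- easy direction : RHS → LHS via M
    intro hx
    rw [SetLike.mem_coe] at hx ⊢
    have hxM : x ∈ M := hR_to_M x hx
    rw [Submodule.mem_inf]
    refine ⟨hM_W00 x hxM, ?_⟩
    rw [Submodule.mem_iInf]
    intro j
    exact hM_Wj (j : Fin p) x hxM
end

section
/- Let $E$ be a field of characteristic $p > 0$, $\alpha \in E \setminus E^p$, and $\beta \in E \setminus E^p(\alpha)$. Suppose $v \in E^p(\alpha, \beta)$ is written as $v = \sum_{m,n=0}^{p-1} c_{m,n} \alpha^m \beta^n$ with $c_{m,n} \in E^p$, and suppose $v$ lies in the $E^p$-span of $\{(\alpha - i)^m \beta^n : (m,n) \neq (0,0)\}$ for every $i \in \{0, \dots, p-1\}$. Then $v \in \mathrm{Span}_{E^p(\alpha)}\{\beta, \beta^2, \dots, \beta^{p-1}\}$. -/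
open Polynomial

theorem pow_indep_aux (E : Type*) [Field E] (p : ℕ) [hp : Fact p.Prime] [CharP E p]
    (F : Subfield E) (x : E) (hx : x ∉ F) (hxp : x ^ p ∈ F)
    (g : Fin p → E) (hg : ∀ i, g i ∈ F)
    (hsum : ∑ i : Fin p, g i * x ^ (i : ℕ) = 0) : ∀ i, g i = 0 := by
  by_contra hne
  push_neg at hne
  obtain ⟨i₀, hi₀⟩ := hne
  set a : F := ⟨x ^ p, hxp⟩ with ha
  have hirr : Irreducible (X ^ p - C a) := by
    apply X_pow_sub_C_irreducible_of_prime hp.out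
    intro b hb
    apply hx
    have hbE : (b : E) ^ p = x ^ p := by
      have := congrArg (Subtype.val) hb
      simpa using this
    have : (b : E) = x := by
      apply frobenius_inj E p
      simpa [frobenius_def] using hbE
    rw [← this]; exact b.2
  have hmono : (X ^ p - C a).Monic := monic_X_pow_sub_C a hp.out.ne_zero
  have haev : Polynomial.aeval x (X ^ p - C a) = 0 := by
    rw [map_sub, map_pow, aeval_X, aeval_C]
    rw [show ((algebraMap F E) a : E) = x ^ p from rfl]
    ring
  have hmin : minpoly F x = X ^ p - C a :=
    (minpoly.eq_of_irreducible_of_monic hirr haev hmono).symm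
  have hdegmin : (minpoly F x).degree = p := by
    rw [hmin]; exact degree_X_pow_sub_C hp.out.pos a
  set P : F[X] := ∑ i : Fin p, C (⟨g i, hg i⟩ : F) * X ^ (i : ℕ) with hP
  have hcoeff : ∀ i : Fin p, P.coeff (i : ℕ) = ⟨g i, hg i⟩ := by
    intro i
    rw [hP, finset_sum_coeff]
    rw [Finset.sum_eq_single i]
    · simp
    · intro j _ hj
      rw [coeff_C_mul, coeff_X_pow, if_neg (fun h => hj (Fin.val_injective h.symm)), mul_zero]
    · simp
  have hP0 : P ≠ 0 := by
    intro h
    apply hi₀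
    have := hcoeff i₀
    rw [h] at this
    simpa [eq_comm] using congrArg Subtype.val this
  have haevP : Polynomial.aeval x P = 0 := by
    rw [hP]
    simp only [map_sum, map_mul, aeval_C, aeval_X_pow]
    rw [← hsum]
    rfl
  have hle := minpoly.degree_le_of_ne_zero F x hP0 haevP
  rw [hdegmin] at hle
  have hdegP : P.degree < p := by
    apply lt_of_le_of_lt (degree_sum_le _ _)
    apply Finset.sup_lt_iff (by exact_mod_cast WithBot.bot_lt_coe p) |>.mpr
    intro i _
    apply lt_of_le_of_lt (degree_mul_le _ _)
    apply lt_of_le_of_lt (add_le_add degree_C_le (degree_X_pow _).le)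
    rw [zero_add]
    exact_mod_cast i.2
  exact absurd (lt_of_le_of_lt hle hdegP) (lt_irrefl _)

/-- Joint independence of `γ^m β^n` over `K`. -/
theorem joint_indep_aux (E : Type*) [Field E] (p : ℕ) [hp : Fact p.Prime] [CharP E p]
    (K F' : Subfield E) (hKF' : K ≤ F') (γ β : E)
    (hγ : γ ∉ K) (hγp : γ ^ p ∈ K) (hγF' : γ ∈ F')
    (hβ : β ∉ F') (hβp : β ^ p ∈ F')
    (a : Fin p → Fin p → E) (ha : ∀ m n, a m n ∈ K)
    (hsum : ∑ m : Fin p, ∑ n : Fin p, a m n * γ ^ (m : ℕ) * β ^ (n : ℕ) = 0) :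
    ∀ m n, a m n = 0 := by
  have h1 : ∑ n : Fin p, (∑ m : Fin p, a m n * γ ^ (m : ℕ)) * β ^ (n : ℕ) = 0 := by
    rw [← hsum, Finset.sum_comm]
    exact Finset.sum_congr rfl fun n _ => Finset.sum_mul _ _ _
  have h2 : ∀ n : Fin p, ∑ m : Fin p, a m n * γ ^ (m : ℕ) = 0 := by
    apply pow_indep_aux E p F' β hβ hβp
    · intro n
      exact Subfield.sum_mem _ fun m _ => Subfield.mul_mem _ (hKF' (ha m n))
        (Subfield.pow_mem _ hγF' _)
    · exact h1
  intro m n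
  exact pow_indep_aux E p K γ hγ hγp (fun m => a m n) (fun m => ha m n) (h2 n) m

/-- Let `E` be a field of characteristic `p > 0`, `α ∈ E \ E^p`, `β ∈ E \ E^p(α)`, and let
`v = ∑_{m,n=0}^{p-1} c m n · α^m β^n` with all `c m n ∈ E^p`. If `v` lies in the `E^p`-span
of `{(α - i)^m β^n : (m,n) ≠ (0,0)}` for every `i ∈ {0, …, p-1}`, then
`v ∈ Span_{E^p(α)}{β, β², …, β^{p-1}}`. -/
theorem mem_span_beta_of_mem_all_W_i_zero (E : Type*) [Field E] (p : ℕ) [Fact p.Prime]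
    [CharP E p] (α β : E) (hα : α ∉ (frobenius E p).fieldRange)
    (hβ : β ∉ Subfield.closure (((frobenius E p).fieldRange : Subfield E) ∪ {α} : Set E))
    (c : Fin p → Fin p → E) (hc : ∀ m n, c m n ∈ (frobenius E p).fieldRange)
    (hmem : ∀ i : Fin p,
      (∑ m : Fin p, ∑ n : Fin p, c m n * α ^ (m : ℕ) * β ^ (n : ℕ)) ∈
        Submodule.span ((frobenius E p).fieldRange)
          {v : E | ∃ m n : Fin p, (m, n) ≠ (0, 0) ∧
            v = (α - ((i : ℕ) : E)) ^ (m : ℕ) * β ^ (n : ℕ)}) :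
    (∑ m : Fin p, ∑ n : Fin p, c m n * α ^ (m : ℕ) * β ^ (n : ℕ)) ∈
      Submodule.span (Subfield.closure
          (((frobenius E p).fieldRange : Subfield E) ∪ {α} : Set E))
        ((fun k : ℕ => β ^ k) '' {k : ℕ | 1 ≤ k ∧ k ≤ p - 1}) := by
  classical
  have hp : Fact p.Prime := inferInstance
  set K : Subfield E := (frobenius E p).fieldRange with hK
  set F' : Subfield E := Subfield.closure ((K : Subfield E) ∪ {α} : Set E) with hF'
  have hKF' : K ≤ F' := fun x hx => Subfield.subset_closure (Or.inl hx)
  have hαF' : α ∈ F' := Subfield.subset_closure (Or.inr rfl)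
  have hnat : ∀ n : ℕ, ((n : E)) ∈ K := fun n => ⟨(n : E), map_natCast (frobenius E p) n⟩
  have hβp : β ^ p ∈ F' := hKF' ⟨β, rfl⟩
  set v := ∑ m : Fin p, ∑ n : Fin p, c m n * α ^ (m : ℕ) * β ^ (n : ℕ) with hv
  -- Step 1: the evaluations vanish
  have key : ∀ i : Fin p, ∑ m : Fin p, c m 0 * ((i : ℕ) : E) ^ (m : ℕ) = 0 := by
    intro i
    set ι : E := ((i : ℕ) : E) with hι
    set γ : E := α - ι with hγdef
    have hιK : ι ∈ K := hnat i
    have hγp : γ ^ p ∈ K := by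
      rw [hγdef, sub_pow_char]
      exact Subfield.sub_mem _ ⟨α, rfl⟩ (Subfield.pow_mem _ hιK p)
    have hγ : γ ∉ K := by
      intro h
      apply hα
      have : γ + ι ∈ K := Subfield.add_mem _ h hιK
      simpa [hγdef] using this
    have hγF' : γ ∈ F' := Subfield.sub_mem _ hαF' (hKF' hιK)
    set V : Submodule K E := Submodule.span K
      {w : E | ∃ m n : Fin p, (m, n) ≠ (0, 0) ∧ w = γ ^ (m : ℕ) * β ^ (n : ℕ)} with hV
    have hvV : v ∈ V := hmem i
    -- generators
    have hgen : ∀ (j : ℕ) (n : Fin p), j < p → (j ≠ 0 ∨ n ≠ 0) →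
        γ ^ j * β ^ (n : ℕ) ∈ V := by
      intro j n hjp hne
      apply Submodule.subset_span
      refine ⟨⟨j, hjp⟩, n, ?_, rfl⟩
      intro h
      rcases hne with h1 | h1
      · exact h1 (by simpa [Fin.ext_iff, Nat.mod_eq_of_lt hjp] using congrArg Prod.fst h)
      · exact h1 (congrArg Prod.snd h)
    -- per-term membership
    have hterm : ∀ m n : Fin p,
        α ^ (m : ℕ) * β ^ (n : ℕ) - (if n = 0 then ι ^ (m : ℕ) else 0) ∈ V := by
      intro m n
      have hαm : α ^ (m : ℕ) = ∑ j ∈ Finset.range ((m : ℕ) + 1),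
          γ ^ j * ι ^ ((m : ℕ) - j) * ((m : ℕ).choose j) := by
        conv_lhs => rw [show α = γ + ι by rw [hγdef]; ring]
        exact add_pow γ ι (m : ℕ)
      by_cases hn : n = 0
      · subst hn
        simp only [eq_self_iff_true, if_true, Fin.val_zero, pow_zero, mul_one]
        have : α ^ (m : ℕ) - ι ^ (m : ℕ) = ∑ j ∈ Finset.range (m : ℕ),
            γ ^ (j + 1) * ι ^ ((m : ℕ) - (j + 1)) * ((m : ℕ).choose (j + 1)) := by
          rw [hαm, Finset.sum_range_succ']
          simp
        rw [this]
        apply Submodule.sum_mem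
        intro j hj
        have hjm : j + 1 ≤ (m : ℕ) := Finset.mem_range.mp hj
        have hjp : j + 1 < p := lt_of_le_of_lt hjm m.2
        have hmem' : γ ^ (j + 1) * β ^ ((0 : Fin p) : ℕ) ∈ V :=
          hgen (j + 1) 0 hjp (Or.inl (Nat.succ_ne_zero j))
        have hsc : ι ^ ((m : ℕ) - (j + 1)) * ((m : ℕ).choose (j + 1) : E) ∈ K :=
          Subfield.mul_mem _ (Subfield.pow_mem _ hιK _) (hnat _)
        have := Submodule.smul_mem V (⟨_, hsc⟩ : K) hmem'
        convert this using 1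
        show _ = (ι ^ ((m : ℕ) - (j + 1)) * ((m : ℕ).choose (j + 1) : E)) *
          (γ ^ (j + 1) * β ^ ((0 : Fin p) : ℕ))
        simp only [Fin.val_zero, pow_zero, mul_one]
        ring
      · simp only [if_neg hn, sub_zero]
        rw [hαm, Finset.sum_mul]
        apply Submodule.sum_mem
        intro j hj
        have hjm : j ≤ (m : ℕ) := Nat.lt_succ_iff.mp (Finset.mem_range.mp hj)
        have hjp : j < p := lt_of_le_of_lt hjm m.2
        have hmem' : γ ^ j * β ^ (n : ℕ) ∈ V := hgen j n hjp (Or.inr hn)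
        have hsc : ι ^ ((m : ℕ) - j) * ((m : ℕ).choose j : E) ∈ K :=
          Subfield.mul_mem _ (Subfield.pow_mem _ hιK _) (hnat _)
        have := Submodule.smul_mem V (⟨_, hsc⟩ : K) hmem'
        convert this using 1
        show _ = (ι ^ ((m : ℕ) - j) * ((m : ℕ).choose j : E)) * (γ ^ j * β ^ (n : ℕ))
        ring
    set S : E := ∑ m : Fin p, c m 0 * ι ^ (m : ℕ) with hS
    have hEq : v - S = ∑ m : Fin p, ∑ n : Fin p,
        c m n * (α ^ (m : ℕ) * β ^ (n : ℕ) - (if n = 0 then ι ^ (m : ℕ) else 0)) := by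
      simp only [mul_sub, Finset.sum_sub_distrib]
      congr 1
      · exact Finset.sum_congr rfl fun m _ => Finset.sum_congr rfl fun n _ =>
          mul_assoc _ _ _
      · refine Finset.sum_congr rfl fun m _ => ?_
        simp [mul_ite, Finset.sum_ite_eq']
    have hsplitV : v - S ∈ V := by
      rw [hEq]
      apply Submodule.sum_mem
      intro m _
      apply Submodule.sum_mem
      intro n _
      exact Submodule.smul_mem V (⟨c m n, hc m n⟩ : K) (hterm m n)
    have hSV : S ∈ V := by
      have : S = v - (v - S) := by ring
      rw [this]
      exact Submodule.sub_mem V hvV hsplitV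
    have hSK : S ∈ K :=
      Subfield.sum_mem _ fun m _ => Subfield.mul_mem _ (hc m 0) (Subfield.pow_mem _ hιK _)
    -- Now show S = 0 via joint independence
    have hset : {w : E | ∃ m n : Fin p, (m, n) ≠ (0, 0) ∧ w = γ ^ (m : ℕ) * β ^ (n : ℕ)} =
        Set.range (fun q : {q : Fin p × Fin p // q ≠ (0, 0)} =>
          γ ^ (q.1.1 : ℕ) * β ^ (q.1.2 : ℕ)) := by
      ext w
      constructor
      · rintro ⟨m, n, h, rfl⟩; exact ⟨⟨(m, n), h⟩, rfl⟩
      · rintro ⟨⟨⟨m, n⟩, h⟩, rfl⟩; exact ⟨m, n, h, rfl⟩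
    rw [hV, hset, Submodule.mem_span_range_iff_exists_fun] at hSV
    obtain ⟨d, hd⟩ := hSV
    set a : Fin p → Fin p → E := fun m n =>
      if h : (m, n) = ((0 : Fin p), (0 : Fin p)) then S else -(d ⟨(m, n), h⟩ : E) with haa
    have haK : ∀ m n, a m n ∈ K := by
      intro m n
      by_cases h : (m, n) = ((0 : Fin p), (0 : Fin p))
      · simp only [haa, dif_pos h]; exact hSK
      · simp only [haa, dif_neg h]; exact Subfield.neg_mem _ (d ⟨(m, n), h⟩).2
    have hasum : ∑ m : Fin p, ∑ n : Fin p, a m n * γ ^ (m : ℕ) * β ^ (n : ℕ) = 0 := by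
      rw [← Finset.sum_product', Finset.univ_product_univ]
      rw [← Finset.add_sum_erase Finset.univ
        (fun q : Fin p × Fin p => a q.1 q.2 * γ ^ (q.1 : ℕ) * β ^ (q.2 : ℕ))
        (Finset.mem_univ ((0 : Fin p), (0 : Fin p)))]
      have h0 : a 0 0 * γ ^ ((0 : Fin p) : ℕ) * β ^ ((0 : Fin p) : ℕ) = S := by
        simp [haa]
      have herase : ∑ q ∈ Finset.univ.erase ((0 : Fin p), (0 : Fin p)),
          a q.1 q.2 * γ ^ (q.1 : ℕ) * β ^ (q.2 : ℕ) = -S := by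
        rw [Finset.sum_subtype (Finset.univ.erase ((0 : Fin p), (0 : Fin p)))
          (p := fun q => q ≠ ((0 : Fin p), (0 : Fin p))) (by simp)]
        rw [← hd]
        rw [← Finset.sum_neg_distrib]
        refine Finset.sum_congr rfl fun q _ => ?_
        have : a q.1.1 q.1.2 = -(d q : E) := by
          simp only [haa]
          rw [dif_neg]
        rw [this]
        show _ = -((d q : E) * (γ ^ (q.1.1 : ℕ) * β ^ (q.1.2 : ℕ)))
        ring
      rw [h0, herase]
      ring
    have := joint_indep_aux E p K F' hKF' γ β hγ hγp hγF' hβ hβp a haK hasum 0 0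
    simpa [haa] using this
  -- Step 2: all c m 0 = 0
  have hc0 : ∀ m : Fin p, c m 0 = 0 := by
    set Q : E[X] := ∑ m : Fin p, C (c m 0) * X ^ (m : ℕ) with hQ
    have heval : ∀ i : Fin p, Q.eval ((i : ℕ) : E) = 0 := by
      intro i
      rw [hQ, eval_finset_sum]
      simp only [eval_mul, eval_C, eval_pow, eval_X]
      exact key i
    have hinj : Function.Injective (fun i : Fin p => ((i : ℕ) : E)) := by
      intro i j h
      exact Fin.ext (CharP.natCast_injOn_Iio E p i.2 j.2 h)
    have hdeg : Q.natDegree < Fintype.card (Fin p) := by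
      rw [Fintype.card_fin]
      have : Q.natDegree ≤ p - 1 := by
        apply Polynomial.natDegree_sum_le_of_forall_le
        intro m _
        apply le_trans (natDegree_C_mul_le _ _)
        rw [natDegree_X_pow]
        have := m.2; omega
      have hp1 := hp.out.pos
      omega
    have hQ0 : Q = 0 := eq_zero_of_natDegree_lt_card_of_eval_eq_zero Q hinj heval hdeg
    intro m
    have : Q.coeff (m : ℕ) = c m 0 := by
      rw [hQ, finset_sum_coeff]
      rw [Finset.sum_eq_single m]
      · simp
      · intro j _ hj
        rw [coeff_C_mul, coeff_X_pow, if_neg (fun h => hj (Fin.val_injective h.symm)), mul_zero]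
      · simp
    rw [hQ0] at this
    simpa [eq_comm] using this
  -- Step 3: conclusion
  show v ∈ _
  rw [hv, Finset.sum_comm]
  apply Submodule.sum_mem
  intro n _
  by_cases hn : n = 0
  · subst hn
    have : ∑ m : Fin p, c m 0 * α ^ (m : ℕ) * β ^ ((0 : Fin p) : ℕ) = 0 := by
      simp [hc0]
    rw [this]
    exact Submodule.zero_mem _
  · have hmemβ : β ^ (n : ℕ) ∈ (fun k : ℕ => β ^ k) '' {k : ℕ | 1 ≤ k ∧ k ≤ p - 1} := by
      refine ⟨(n : ℕ), ⟨?_, ?_⟩, rfl⟩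
      · exact Nat.one_le_iff_ne_zero.mpr (fun h => hn (Fin.ext (by simp [h])))
      · have := n.2; omega
    have hsF' : (∑ m : Fin p, c m n * α ^ (m : ℕ)) ∈ F' :=
      Subfield.sum_mem _ fun m _ => Subfield.mul_mem _ (hKF' (hc m n))
        (Subfield.pow_mem _ hαF' _)
    have : ∑ m : Fin p, c m n * α ^ (m : ℕ) * β ^ (n : ℕ) =
        (⟨_, hsF'⟩ : F') • β ^ (n : ℕ) := by
      show _ = (∑ m : Fin p, c m n * α ^ (m : ℕ)) * β ^ (n : ℕ)
      rw [Finset.sum_mul]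
    rw [this]
    exact Submodule.smul_mem _ _ (Submodule.subset_span hmemβ)
end
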